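/- arXiv:1210.4107 — 9 statements merged into one kernel-verified Lean document; each statement's English description precedes it below -/
import Mathlib

section
/- Let X and Y be metric spaces, F : X ⇒ Y a multifunction and (x̄,ȳ) ∈ Gr F. Then the following are equivalent: (a) F is open at some linear rate around (x̄,ȳ); (b) F⁻¹ has the Aubin property around (ȳ,x̄); (c) F is metrically regular around (x̄,ȳ). Moreover, in any of these situations, (lop F(x̄,ȳ))⁻¹ = lip F⁻¹(ȳ,x̄) = reg F(x̄,ȳ). -/
open Filter Set Metric
open scoped ENNReal Topology

/-- The graph of a multifunction. -/
def graphOf {X Y : Type*} (F : X → Set Y) : Set (X × Y) := {p | p.2 ∈ F p.1}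

/-- The inverse multifunction: `preImg F y = {x | y ∈ F x}`. -/
def preImg {X Y : Type*} (F : X → Set Y) (y : Y) : Set X := {x | y ∈ F x}

/-- The image of a set under a multifunction: `F(A) = ⋃_{x ∈ A} F x`. -/
def setImage {X Y : Type*} (F : X → Set Y) (A : Set X) : Set Y := ⋃ x ∈ A, F x

/-- The excess `e(A,B) = sup_{a ∈ A} d(a,B)` (valued in `ℝ≥0∞`). -/
noncomputable def excess {Y : Type*} [PseudoEMetricSpace Y] (A B : Set Y) : ℝ≥0∞ :=
  ⨆ a ∈ A, EMetric.infEdist a B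

/-- `F` is open at linear rate `L > 0` around `(x₀, y₀)`. -/
def OpenAtRateAround {X Y : Type*} [MetricSpace X] [MetricSpace Y]
    (F : X → Set Y) (x₀ : X) (y₀ : Y) (L : ℝ) : Prop :=
  ∃ ε > (0 : ℝ), ∃ U ∈ 𝓝 x₀, ∃ V ∈ 𝓝 y₀,
    ∀ ρ : ℝ, 0 < ρ → ρ < ε → ∀ x ∈ U, ∀ y ∈ V, y ∈ F x →
      ball y (ρ * L) ⊆ setImage F (ball x ρ)

/-- `F` has the Aubin property around `(x₀, y₀)` with constant `L > 0`. -/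
def AubinAround {X Y : Type*} [MetricSpace X] [MetricSpace Y]
    (F : X → Set Y) (x₀ : X) (y₀ : Y) (L : ℝ) : Prop :=
  ∃ U ∈ 𝓝 x₀, ∃ V ∈ 𝓝 y₀, ∀ x ∈ U, ∀ u ∈ U,
    excess (F x ∩ V) (F u) ≤ ENNReal.ofReal (L * dist x u)

/-- `F` is metrically regular around `(x₀, y₀)` with constant `L > 0`. -/
def MetRegAround {X Y : Type*} [MetricSpace X] [MetricSpace Y]
    (F : X → Set Y) (x₀ : X) (y₀ : Y) (L : ℝ) : Prop :=
  ∃ U ∈ 𝓝 x₀, ∃ V ∈ 𝓝 y₀, ∀ x ∈ U, ∀ y ∈ V,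
    EMetric.infEdist x (preImg F y) ≤ ENNReal.ofReal L * EMetric.infEdist y (F x)

/-- The exact linear openness (covering) bound `lop F(x₀,y₀)`. -/
noncomputable def lopMod {X Y : Type*} [MetricSpace X] [MetricSpace Y]
    (F : X → Set Y) (x₀ : X) (y₀ : Y) : ℝ≥0∞ :=
  sSup {l : ℝ≥0∞ | ∃ L : ℝ, 0 < L ∧ OpenAtRateAround F x₀ y₀ L ∧ l = ENNReal.ofReal L}

/-- The exact Lipschitz bound `lip F(x₀,y₀)`. -/
noncomputable def lipMod {X Y : Type*} [MetricSpace X] [MetricSpace Y]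
    (F : X → Set Y) (x₀ : X) (y₀ : Y) : ℝ≥0∞ :=
  sInf {l : ℝ≥0∞ | ∃ L : ℝ, 0 < L ∧ AubinAround F x₀ y₀ L ∧ l = ENNReal.ofReal L}

/-- The exact regularity bound `reg F(x₀,y₀)`. -/
noncomputable def regMod {X Y : Type*} [MetricSpace X] [MetricSpace Y]
    (F : X → Set Y) (x₀ : X) (y₀ : Y) : ℝ≥0∞ :=
  sInf {l : ℝ≥0∞ | ∃ L : ℝ, 0 < L ∧ MetRegAround F x₀ y₀ L ∧ l = ENNReal.ofReal L}


private lemma metreg_to_aubin {X Y : Type*} [MetricSpace X] [MetricSpace Y]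
    {F : X → Set Y} {xb : X} {yb : Y} {L : ℝ} (hL : 0 < L)
    (hm : MetRegAround F xb yb L) : AubinAround (preImg F) yb xb L := by
  obtain ⟨U, hU, V, hV, hreg⟩ := hm
  refine ⟨V, hV, U, hU, ?_⟩
  intro y hy y' hy'
  refine iSup₂_le fun x hx => ?_
  calc EMetric.infEdist x (preImg F y')
      ≤ ENNReal.ofReal L * EMetric.infEdist y' (F x) := hreg x hx.2 y' hy'
    _ ≤ ENNReal.ofReal L * edist y' y :=
        mul_le_mul_right (EMetric.infEdist_le_edist_of_mem (show y ∈ F x from hx.1)) _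
    _ = ENNReal.ofReal (L * dist y y') := by
        rw [edist_dist, ← ENNReal.ofReal_mul hL.le, dist_comm]

private lemma aubin_to_open {X Y : Type*} [MetricSpace X] [MetricSpace Y]
    {F : X → Set Y} {xb : X} {yb : Y} {L : ℝ} (hL : 0 < L)
    (ha : AubinAround (preImg F) yb xb L) : OpenAtRateAround F xb yb (1 / L) := by
  obtain ⟨U, hU, V, hV, hab⟩ := ha
  simp only [excess] at hab
  obtain ⟨r, hr, hrU⟩ := Metric.mem_nhds_iff.mp hU
  refine ⟨L * r / 2, by positivity, V, hV, ball yb (r / 2),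
    ball_mem_nhds _ (by linarith), ?_⟩
  intro ρ hρ hρε x hxV y hy hyFx y' hy'
  simp only [mem_ball] at hy hy'
  have hρL : ρ * (1 / L) = ρ / L := by ring
  rw [hρL] at hy'
  have hρLr : ρ / L < r / 2 := by
    rw [div_lt_div_iff₀ hL (by norm_num)]
    nlinarith
  have hyU : y ∈ U := hrU (mem_ball.mpr (by linarith))
  have hy'U : y' ∈ U := hrU (mem_ball.mpr (by
    have := dist_triangle y' y yb
    linarith))
  have h1 : EMetric.infEdist x (preImg F y') ≤ ENNReal.ofReal (L * dist y y') :=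
    le_trans (le_iSup₂_of_le x ⟨hyFx, hxV⟩ le_rfl) (hab y hyU y' hy'U)
  have h2 : L * dist y y' < ρ := by
    rw [dist_comm] at hy'
    calc L * dist y y' < L * (ρ / L) := by nlinarith
      _ = ρ := by field_simp
  have h3 : EMetric.infEdist x (preImg F y') < ENNReal.ofReal ρ :=
    lt_of_le_of_lt h1 (by rwa [ENNReal.ofReal_lt_ofReal_iff hρ])
  obtain ⟨x', hx'P, hx'd⟩ := EMetric.infEdist_lt_iff.mp h3
  rw [edist_lt_ofReal] at hx'd
  simp only [setImage, mem_iUnion]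
  exact ⟨x', mem_ball'.mpr hx'd, hx'P⟩

private lemma open_to_metreg {X Y : Type*} [MetricSpace X] [MetricSpace Y]
    {F : X → Set Y} {xb : X} {yb : Y} {L : ℝ} (hL : 0 < L)
    (hgr : yb ∈ F xb) (ho : OpenAtRateAround F xb yb L) :
    MetRegAround F xb yb (1 / L) := by
  obtain ⟨ε, hε, U, hU, V, hV, hop⟩ := ho
  obtain ⟨r, hr, hrU⟩ := Metric.mem_nhds_iff.mp hU
  obtain ⟨s, hs, hsV⟩ := Metric.mem_nhds_iff.mp hV
  have hLs : 0 < s / (2 * L) := by positivity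
  set c : ℝ := min (ε / 2) (s / (2 * L)) with hc_def
  have hc : 0 < c := lt_min (by linarith) hLs
  have hcε : c < ε := lt_of_le_of_lt (min_le_left _ _) (by linarith)
  have hLc : L * c ≤ s / 2 := by
    have h1 : c ≤ s / (2 * L) := min_le_right _ _
    calc L * c ≤ L * (s / (2 * L)) := by nlinarith
      _ = s / 2 := by field_simp
  set ρ₁ : ℝ := c / 2 with hρ₁_def
  have hρ₁ : 0 < ρ₁ := by positivity
  set δx : ℝ := min (c / 4) (r / 2) with hδx_def
  have hδx : 0 < δx := lt_min (by linarith) (by linarith)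
  set δy : ℝ := min (ρ₁ * L / 2) (s / 2) with hδy_def
  have hδy : 0 < δy := lt_min (by positivity) (by linarith)
  refine ⟨ball xb δx, ball_mem_nhds _ hδx, ball yb δy, ball_mem_nhds _ hδy, ?_⟩
  intro x hx y hy
  simp only [mem_ball] at hx hy
  set D := EMetric.infEdist y (F x) with hD_def
  have hxU : x ∈ U := hrU (mem_ball.mpr (by
    have : δx ≤ r / 2 := min_le_right _ _
    linarith))
  by_cases hcase : D < ENNReal.ofReal (L * c)
  · -- Case 1 : d(y, F x) is small
    have hDne : D ≠ ⊤ := ne_top_of_lt (lt_of_lt_of_le hcase le_top)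
    have hDlt : D.toReal < L * c := ENNReal.toReal_lt_of_lt_ofReal hcase
    set s0 : ℝ := D.toReal / L with hs0_def
    have hs0c : s0 < c := by
      rw [hs0_def, div_lt_iff₀ hL]; nlinarith
    have hs0nn : 0 ≤ s0 := div_nonneg ENNReal.toReal_nonneg hL.le
    have key : ∀ t : ℝ, s0 < t → t < c →
        EMetric.infEdist x (preImg F y) ≤ ENNReal.ofReal t := by
      intro t hts htc
      have ht : 0 < t := lt_of_le_of_lt hs0nn hts
      have hDt : D < ENNReal.ofReal (L * t) := by
        rw [ENNReal.lt_ofReal_iff_toReal_lt hDne]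
        rw [hs0_def, div_lt_iff₀ hL] at hts
        nlinarith
      obtain ⟨y', hy'F, hy'd⟩ := EMetric.infEdist_lt_iff.mp hDt
      rw [edist_lt_ofReal] at hy'd
      have hy'V : y' ∈ V := hsV (mem_ball.mpr (by
        have h1 := dist_triangle y' y yb
        have h2 : dist y' y < L * t := by rwa [dist_comm] at hy'd
        have h3 : L * t < L * c := by nlinarith
        have h4 : δy ≤ s / 2 := min_le_right _ _
        linarith))
      have hsub := hop t ht (lt_trans htc hcε) x hxU y' hy'V hy'F
      have hymem : y ∈ ball y' (t * L) := mem_ball.mpr (by rw [mul_comm]; exact hy'd)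
      have := hsub hymem
      simp only [setImage, mem_iUnion] at this
      obtain ⟨x', hx'b, hx'F⟩ := this
      refine le_trans
        (EMetric.infEdist_le_edist_of_mem (show x' ∈ preImg F y from hx'F)) ?_
      rw [edist_dist]
      exact ENNReal.ofReal_le_ofReal (le_of_lt (by
        rw [mem_ball] at hx'b; rw [dist_comm]; exact hx'b))
    have hfin : EMetric.infEdist x (preImg F y) ≠ ⊤ :=
      ne_top_of_le_ne_top ENNReal.ofReal_ne_top
        (key ((s0 + c) / 2) (by linarith) (by linarith))
    have htr : (EMetric.infEdist x (preImg F y)).toReal ≤ s0 := by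
      by_contra hcon
      push_neg at hcon
      set a := (EMetric.infEdist x (preImg F y)).toReal with ha_def
      set t := min ((s0 + a) / 2) ((s0 + c) / 2) with ht_def
      have h1 : s0 < t := lt_min (by linarith) (by linarith)
      have h2 : t < c := lt_of_le_of_lt (min_le_right _ _) (by linarith)
      have h3 : t < a := lt_of_le_of_lt (min_le_left _ _) (by linarith)
      have h4 := key t h1 h2
      have h5 : a ≤ t := ENNReal.toReal_le_of_le_ofReal
        (le_of_lt (lt_of_le_of_lt hs0nn h1)) h4
      linarith
    have hle : EMetric.infEdist x (preImg F y) ≤ ENNReal.ofReal s0 :=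
      (ENNReal.le_ofReal_iff_toReal_le hfin hs0nn).mpr htr
    calc EMetric.infEdist x (preImg F y) ≤ ENNReal.ofReal s0 := hle
      _ = ENNReal.ofReal (1 / L) * D := by
          have : s0 = (1 / L) * D.toReal := by rw [hs0_def]; ring
          rw [this, ENNReal.ofReal_mul (by positivity), ENNReal.ofReal_toReal hDne]
  · -- Case 2 : d(y, F x) is large
    push_neg at hcase
    have hyV : dist y yb < ρ₁ * L := by
      have h1 : δy ≤ ρ₁ * L / 2 := min_le_left _ _
      nlinarith
    have hρ₁ε : ρ₁ < ε := by rw [hρ₁_def]; linarith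
    have hxbU : xb ∈ U := hrU (mem_ball_self hr)
    have hybV : yb ∈ V := hsV (mem_ball_self hs)
    have hsub := hop ρ₁ hρ₁ hρ₁ε xb hxbU yb hybV hgr
    have := hsub (mem_ball.mpr hyV)
    simp only [setImage, mem_iUnion] at this
    obtain ⟨x', hx'b, hx'F⟩ := this
    rw [mem_ball] at hx'b
    have hdd : dist x x' < c := by
      have h1 := dist_triangle x xb x'
      have h2 : dist xb x' = dist x' xb := dist_comm _ _
      have h3 : δx ≤ c / 4 := min_le_left _ _
      have : dist x x' < δx + ρ₁ := by rw [dist_comm x' xb] at hx'b; linarith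
      linarith [hρ₁_def ▸ le_refl ρ₁]
    calc EMetric.infEdist x (preImg F y)
        ≤ edist x x' := EMetric.infEdist_le_edist_of_mem (show x' ∈ preImg F y from hx'F)
      _ = ENNReal.ofReal (dist x x') := edist_dist _ _
      _ ≤ ENNReal.ofReal c := ENNReal.ofReal_le_ofReal hdd.le
      _ = ENNReal.ofReal (1 / L) * ENNReal.ofReal (L * c) := by
          rw [← ENNReal.ofReal_mul (by positivity)]
          congr 1
          field_simp
      _ ≤ ENNReal.ofReal (1 / L) * D := mul_le_mul_right hcase _

/-- Openness at linear rate, the Aubin property of the inverse, and metric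
regularity are equivalent, and the corresponding exact bounds satisfy
`(lop F(xb,yb))⁻¹ = lip F⁻¹(yb,xb) = reg F(xb,yb)`. -/
theorem linear_openness_aubin_metric_regularity_equivalence
    {X Y : Type*} [MetricSpace X] [MetricSpace Y]
    (F : X → Set Y) (xb : X) (yb : Y) (h : (xb, yb) ∈ graphOf F) :
    ((∃ L > (0 : ℝ), OpenAtRateAround F xb yb L) ↔
      (∃ L > (0 : ℝ), AubinAround (preImg F) yb xb L)) ∧
    ((∃ L > (0 : ℝ), AubinAround (preImg F) yb xb L) ↔
      (∃ L > (0 : ℝ), MetRegAround F xb yb L)) ∧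
    ((∃ L > (0 : ℝ), OpenAtRateAround F xb yb L) →
      ((lopMod F xb yb)⁻¹ = lipMod (preImg F) yb xb ∧
        lipMod (preImg F) yb xb = regMod F xb yb)) := by
  have hgr : yb ∈ F xb := h
  have oa : ∀ L : ℝ, 0 < L → OpenAtRateAround F xb yb L →
      AubinAround (preImg F) yb xb (1 / L) :=
    fun L hL ho => metreg_to_aubin (by positivity) (open_to_metreg hL hgr ho)
  have am : ∀ M : ℝ, 0 < M → AubinAround (preImg F) yb xb M →
      MetRegAround F xb yb M := by
    intro M hM ha
    have := open_to_metreg (by positivity) hgr (aubin_to_open hM ha)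
    rwa [one_div_one_div] at this
  refine ⟨⟨fun ⟨L, hL, ho⟩ => ⟨1 / L, by positivity, oa L hL ho⟩,
           fun ⟨M, hM, ha⟩ => ⟨1 / M, by positivity, aubin_to_open hM ha⟩⟩,
          ⟨fun ⟨M, hM, ha⟩ => ⟨M, hM, am M hM ha⟩,
           fun ⟨M, hM, hm⟩ => ⟨M, hM, metreg_to_aubin hM hm⟩⟩, ?_⟩
  intro _
  have hTR : {l : ℝ≥0∞ | ∃ M : ℝ, 0 < M ∧ AubinAround (preImg F) yb xb M ∧
        l = ENNReal.ofReal M}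
      = {l : ℝ≥0∞ | ∃ M : ℝ, 0 < M ∧ MetRegAround F xb yb M ∧
        l = ENNReal.ofReal M} := by
    ext l
    constructor
    · rintro ⟨M, hM, ha, rfl⟩; exact ⟨M, hM, am M hM ha, rfl⟩
    · rintro ⟨M, hM, hm, rfl⟩; exact ⟨M, hM, metreg_to_aubin hM hm, rfl⟩
  have h2 : lipMod (preImg F) yb xb = regMod F xb yb := by
    rw [lipMod, regMod, hTR]
  refine ⟨le_antisymm ?_ ?_, h2⟩
  · apply le_sInf
    rintro l ⟨M, hM, ha, rfl⟩
    have h1 : ENNReal.ofReal (1 / M) ≤ lopMod F xb yb :=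
      le_sSup ⟨1 / M, by positivity, aubin_to_open hM ha, rfl⟩
    calc (lopMod F xb yb)⁻¹ ≤ (ENNReal.ofReal (1 / M))⁻¹ :=
          ENNReal.inv_le_inv.mpr h1
      _ = ENNReal.ofReal M := by
          rw [one_div, ENNReal.ofReal_inv_of_pos hM, inv_inv]
  · have hlop : lopMod F xb yb ≤ (lipMod (preImg F) yb xb)⁻¹ := by
      apply sSup_le
      rintro l ⟨L, hL, ho, rfl⟩
      have h1 : lipMod (preImg F) yb xb ≤ ENNReal.ofReal (1 / L) :=
        sInf_le ⟨1 / L, by positivity, oa L hL ho, rfl⟩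
      calc ENNReal.ofReal L = (ENNReal.ofReal (1 / L))⁻¹ := by
            rw [one_div, ENNReal.ofReal_inv_of_pos hL, inv_inv]
        _ ≤ (lipMod (preImg F) yb xb)⁻¹ := ENNReal.inv_le_inv.mpr h1
    calc lipMod (preImg F) yb xb = (lipMod (preImg F) yb xb)⁻¹⁻¹ :=
          (inv_inv _).symm
      _ ≤ (lopMod F xb yb)⁻¹ := ENNReal.inv_le_inv.mpr hlop
end

section
/- Let (X,d) be a complete metric space, f : X → ℝ ∪ {+∞} a lower semicontinuous function, and x̄ ∈ X with f(x̄) > 0. Set S := {x ∈ X : f(x) ≤ 0} and define m(x̄) := inf { sup_{u ∈ X, u ≠ x} (f(x) − [f(u)]₊)/d(x,u) : x ∈ X with d(x,x̄) < d(x̄,S) and f(x) ≤ f(x̄) }. Then m(x̄)·d(x̄,S) ≤ f(x̄). -/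
open Filter Set Metric
open scoped ENNReal Topology

lemma ekeland_aux {X : Type*} [MetricSpace X] [CompleteSpace X]
    (g : X → ℝ) (hg : LowerSemicontinuous g) (hg0 : ∀ x, 0 ≤ g x)
    (σ : ℝ) (hσ : 0 < σ) (x0 : X) :
    ∃ y, g y + σ * dist y x0 ≤ g x0 ∧ ∀ z, z ≠ y → g y < g z + σ * dist z y := by
  set P : X → X → Prop := fun z x => g z + σ * dist z x ≤ g x with hP
  have Prefl : ∀ x, P x x := fun x => by simp [hP]
  have Ptrans : ∀ {z x w}, P z x → P x w → P z w := by
    intro z x w h1 h2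
    have := dist_triangle z x w
    simp only [hP] at *
    nlinarith [dist_nonneg (x := z) (y := x), dist_nonneg (x := x) (y := w)]
  have key : ∀ (x : X) (n : ℕ), ∃ z, P z x ∧ g z < sInf (g '' {w | P w x}) + (1/2)^n := by
    intro x n
    obtain ⟨a, ⟨z, hz, rfl⟩, ha⟩ := Real.lt_sInf_add_pos (s := g '' {w | P w x})
      ⟨g x, x, Prefl x, rfl⟩ (by positivity : (0:ℝ) < (1/2)^n)
    exact ⟨z, hz, ha⟩
  choose F hF1 hF2 using key
  set seq : ℕ → X := fun n => Nat.rec x0 (fun n x => F x n) n with hseq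
  have seq0 : seq 0 = x0 := rfl
  have seqS : ∀ n, seq (n+1) = F (seq n) n := fun n => rfl
  have h1 : ∀ n, P (seq (n+1)) (seq n) := fun n => hF1 (seq n) n
  have h2 : ∀ n, g (seq (n+1)) < sInf (g '' {w | P w (seq n)}) + (1/2)^n :=
    fun n => hF2 (seq n) n
  have hchain : ∀ n m, n ≤ m → P (seq m) (seq n) := by
    intro n m hnm
    induction m, hnm using Nat.le_induction with
    | base => exact Prefl _
    | succ m hnm ih => exact Ptrans (h1 m) ih
  have hanti : ∀ n m, n ≤ m → g (seq m) ≤ g (seq n) := by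
    intro n m hnm
    have := hchain n m hnm
    simp only [hP] at this
    nlinarith [dist_nonneg (x := seq m) (y := seq n)]
  have hbdd : BddBelow (Set.range (fun n => g (seq n))) :=
    ⟨0, by rintro _ ⟨n, rfl⟩; exact hg0 _⟩
  set l : ℝ := ⨅ n, g (seq n) with hl
  have hglim : Tendsto (fun n => g (seq n)) atTop (𝓝 l) :=
    tendsto_atTop_ciInf (fun a b hab => hanti a b hab) hbdd
  have hlle : ∀ n, l ≤ g (seq n) := fun n => ciInf_le hbdd n
  have hcauchy : CauchySeq seq := by
    apply cauchySeq_of_le_tendsto_0 (fun N => (g (seq N) - l) / σ)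
    · intro n m N hn hm
      rcases le_total n m with h | h
      · rw [dist_comm]
        have hc := hchain n m h
        simp only [hP] at hc
        have : σ * dist (seq m) (seq n) ≤ g (seq n) - g (seq m) := by linarith
        rw [le_div_iff₀ hσ]
        have h3 := hanti N n hn
        have h4 := hlle m
        nlinarith
      · have hc := hchain m n h
        simp only [hP] at hc
        have : σ * dist (seq n) (seq m) ≤ g (seq m) - g (seq n) := by linarith
        rw [le_div_iff₀ hσ]
        have h3 := hanti N m hm
        have h4 := hlle n
        nlinarith
    · have : Tendsto (fun N => (g (seq N) - l) / σ) atTop (𝓝 ((l - l)/σ)) :=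
        ((hglim.sub_const l).div_const σ)
      simpa using this
  obtain ⟨y, hy⟩ := cauchySeq_tendsto_of_complete hcauchy
  have hgyl : g y ≤ l := by
    by_contra hcon
    push_neg at hcon
    obtain ⟨t, ht1, ht2⟩ := exists_between hcon
    have hev : ∀ᶠ n in atTop, t < g (seq n) := hy.eventually (hg.lowerSemicontinuousAt y t ht2)
    have hev2 : ∀ᶠ n in atTop, g (seq n) < t := hglim.eventually (gt_mem_nhds ht1)
    obtain ⟨n, h1', h2'⟩ := (hev.and hev2).exists
    linarith
  have hPy : ∀ n, P y (seq n) := by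
    intro n
    have hle : l + σ * dist y (seq n) ≤ g (seq n) := by
      have htend : Tendsto (fun m => g (seq m) + σ * dist (seq m) (seq n)) atTop
          (𝓝 (l + σ * dist y (seq n))) :=
        hglim.add (((hy.dist tendsto_const_nhds).const_mul σ))
      refine le_of_tendsto htend ?_
      filter_upwards [eventually_ge_atTop n] with m hm
      exact hchain n m hm
    simp only [hP]
    linarith
  refine ⟨y, by simpa [seq0] using hPy 0, ?_⟩
  intro z hz
  by_contra hcon
  push_neg at hcon
  have hPzy : P z y := hcon
  have hlgz : l ≤ g z := by
    have hmem : ∀ n, g z ∈ g '' {w | P w (seq n)} := fun n => ⟨z, Ptrans hPzy (hPy n), rfl⟩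
    have hsinf : ∀ n, sInf (g '' {w | P w (seq n)}) ≤ g z := by
      intro n
      exact csInf_le ⟨0, by rintro _ ⟨w, _, rfl⟩; exact hg0 w⟩ (hmem n)
    have hup : ∀ n, g (seq (n+1)) ≤ g z + (1/2)^n := fun n => le_of_lt
      (lt_of_lt_of_le (h2 n) (by linarith [hsinf n]))
    have ht1 : Tendsto (fun n => g (seq (n+1))) atTop (𝓝 l) :=
      hglim.comp (tendsto_add_atTop_nat 1)
    have ht2 : Tendsto (fun n : ℕ => g z + (1/2:ℝ)^n) atTop (𝓝 (g z + 0)) :=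
      tendsto_const_nhds.add (tendsto_pow_atTop_nhds_zero_of_lt_one (by norm_num) (by norm_num))
    have := le_of_tendsto_of_tendsto' ht1 ht2 hup
    simpa using this
  have hdz : σ * dist z y ≤ 0 := by
    simp only [hP] at hPzy
    linarith
  have hdzy : dist z y = 0 :=
    le_antisymm (by nlinarith [dist_nonneg (x := z) (y := y)]) dist_nonneg
  exact hz (dist_eq_zero.mp hdzy)

/-- error bound, Ngai–Théra. Let `(X,d)` be a complete metric space,
`f : X → ℝ ∪ {+∞}` lower semicontinuous (realized as an `EReal`-valued function never
taking the value `⊥`), and `xb ∈ X` with `f xb > 0`. With `S = {x | f x ≤ 0}` and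
`m(xb) = inf { sup_{u ≠ x} (f x − [f u]₊)/d(x,u) : d(x,xb) < d(xb,S), f x ≤ f xb }`,
one has `m(xb) · d(xb,S) ≤ f xb`. -/
theorem error_bound_estimate
    {X : Type*} [MetricSpace X] [CompleteSpace X]
    (f : X → EReal) (hf : LowerSemicontinuous f) (hbot : ∀ x, f x ≠ ⊥)
    (xb : X) (hpos : 0 < f xb) :
    (⨅ x ∈ {x : X | edist x xb < EMetric.infEdist xb {x : X | f x ≤ 0} ∧ f x ≤ f xb},
        ⨆ u ∈ {u : X | u ≠ x},
          (f x - max (f u) 0) / ((dist x u : ℝ) : EReal)) *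
      ((EMetric.infEdist xb {x : X | f x ≤ 0} : ℝ≥0∞) : EReal) ≤ f xb := by
  set D := EMetric.infEdist xb {x : X | f x ≤ 0} with hD
  set m := ⨅ x ∈ {x : X | edist x xb < D ∧ f x ≤ f xb},
        ⨆ u ∈ {u : X | u ≠ x},
          (f x - max (f u) 0) / ((dist x u : ℝ) : EReal) with hm
  rcases eq_or_ne (f xb) ⊤ with htop | htop
  · rw [htop]; exact le_top
  rcases eq_or_ne D 0 with hD0 | hD0
  · rw [hD0, EReal.coe_ennreal_zero, mul_zero]; exact hpos.le
  have hDpos : 0 < D := pos_iff_ne_zero.mpr hD0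
  set c := (f xb).toReal with hcdef
  have hc : (c : EReal) = f xb := EReal.coe_toReal htop (hbot xb)
  have hcpos : 0 < c := by
    have : (0 : EReal) < (c : EReal) := hc ▸ hpos
    exact_mod_cast this
  by_contra hcon
  push_neg at hcon
  -- hcon : f xb < m * D
  have hm_pos : (0 : EReal) < m := by
    by_contra hmp
    push_neg at hmp
    have hnm : (0 : EReal) ≤ -m := by
      rw [show (0 : EReal) = -0 by simp, EReal.neg_le_neg_iff]
      exact hmp
    have h1 : (0 : EReal) ≤ (-m) * (D : EReal) :=
      mul_nonneg (α := EReal) hnm (EReal.coe_ennreal_nonneg D)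
    have h2 : m * (D : EReal) ≤ 0 := by
      rw [EReal.neg_mul] at h1
      rw [show (0 : EReal) = -0 by simp] at h1
      exact EReal.neg_le_neg_iff.mp h1
    exact absurd ((hcon.trans_le h2).trans hpos) (lt_irrefl _)
  -- find lam
  obtain ⟨lam, hlam_pos, hlamD, hsig_m⟩ :
      ∃ lam : ℝ, 0 < lam ∧ ENNReal.ofReal lam < D ∧ ((c / lam : ℝ) : EReal) < m := by
    rcases eq_or_ne m ⊤ with hmtop | hmtop
    · obtain ⟨r, _, hr1, hr2⟩ := ENNReal.lt_iff_exists_real_btwn.mp hDpos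
      exact ⟨r, ENNReal.ofReal_pos.mp hr1, hr2, hmtop ▸ EReal.coe_lt_top _⟩
    · have hmbot : m ≠ ⊥ := ((by simp : (⊥:EReal) < 0).trans hm_pos).ne'
      set m' := m.toReal with hm'def
      have hm' : (m' : EReal) = m := EReal.coe_toReal hmtop hmbot
      have hm'pos : 0 < m' := by
        have : (0 : EReal) < (m' : EReal) := hm' ▸ hm_pos
        exact_mod_cast this
      have hkey : ENNReal.ofReal (c / m') < D := by
        by_contra hk
        push_neg at hk
        have hle : (D : EReal) ≤ ((ENNReal.ofReal (c / m') : ℝ≥0∞) : EReal) :=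
          EReal.coe_ennreal_le_coe_ennreal_iff.mpr hk
        have h2 : ((ENNReal.ofReal (c / m') : ℝ≥0∞) : EReal) = ((c / m' : ℝ) : EReal) := by
          rw [EReal.coe_ennreal_ofReal, max_eq_left (div_pos hcpos hm'pos).le]
        have h3 : m * (D : EReal) ≤ m * ((c / m' : ℝ) : EReal) := by
          rw [← h2]
          exact mul_le_mul_of_nonneg_left hle hm_pos.le
        have h4 : m * ((c / m' : ℝ) : EReal) = ((m' * (c / m') : ℝ) : EReal) := by
          rw [← hm', ← EReal.coe_mul]
        have h5 : m' * (c / m') = c := by field_simp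
        have h6 : m * (D : EReal) ≤ f xb := by
          rw [← hc]; calc m * (D : EReal) ≤ _ := h3
          _ = (c : EReal) := by rw [h4, h5]
        exact absurd (hcon.trans_le h6) (lt_irrefl _)
      obtain ⟨r, _, hr1, hr2⟩ := ENNReal.lt_iff_exists_real_btwn.mp hkey
      have hcm : c / m' < r := by
        by_contra h
        push_neg at h
        exact absurd (ENNReal.ofReal_le_ofReal h) (not_le.mpr hr1)
      have hrpos : 0 < r := (div_pos hcpos hm'pos).trans hcm
      refine ⟨r, hrpos, hr2, ?_⟩
      rw [← hm', EReal.coe_lt_coe_iff, div_lt_iff₀ hrpos]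
      have := (div_lt_iff₀ hm'pos).mp hcm
      linarith
  set σ := c / lam with hσdef
  have hσpos : 0 < σ := by positivity
  -- the truncated function
  set e : X → EReal := fun x => min (max (f x) 0) (c : EReal) with he
  set g : X → ℝ := fun x => (e x).toReal with hgdef
  have he0 : ∀ x, (0 : EReal) ≤ e x := fun x =>
    le_min (le_max_right _ _) (by exact_mod_cast hcpos.le)
  have hec : ∀ x, e x ≤ (c : EReal) := fun x => min_le_right _ _
  have he_bot : ∀ x, e x ≠ ⊥ := fun x => ((by simp : (⊥:EReal) < 0).trans_le (he0 x)).ne'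
  have he_top : ∀ x, e x ≠ ⊤ := fun x => ((hec x).trans_lt (EReal.coe_lt_top c)).ne
  have hg_coe : ∀ x, ((g x : ℝ) : EReal) = e x := fun x => EReal.coe_toReal (he_top x) (he_bot x)
  have hg0 : ∀ x, 0 ≤ g x := by
    intro x
    have : ((0 : ℝ) : EReal) ≤ ((g x : ℝ) : EReal) := by rw [hg_coe]; exact_mod_cast he0 x
    exact_mod_cast this
  have hgc : ∀ x, g x ≤ c := by
    intro x
    have : ((g x : ℝ) : EReal) ≤ ((c : ℝ) : EReal) := by rw [hg_coe]; exact hec x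
    exact_mod_cast this
  have hgxb : g xb = c := by
    have hexb : e xb = (c : EReal) := by
      simp only [he]
      rw [max_eq_left hpos.le, ← hc, min_self]
    simp [hgdef, hexb]
  have hlscg : LowerSemicontinuous g := by
    intro x t ht
    rcases lt_or_ge t 0 with ht0 | ht0
    · exact Eventually.of_forall fun z => lt_of_lt_of_le ht0 (hg0 z)
    · have h1 : ((t : ℝ) : EReal) < e x := by
        rw [← hg_coe x] at *
        exact_mod_cast ht
      have h3 : ((t : ℝ) : EReal) < (c : EReal) := h1.trans_le (min_le_right _ _)
      have h4 : ((t : ℝ) : EReal) < f x := by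
        rcases lt_max_iff.mp (h1.trans_le (min_le_left _ _)) with h | h
        · exact h
        · exfalso
          have : t < 0 := by exact_mod_cast h
          linarith
      filter_upwards [hf x _ h4] with z hz
      have h5 : ((t : ℝ) : EReal) < e z := lt_min (hz.trans_le (le_max_left _ _)) h3
      rw [← hg_coe z] at h5
      exact_mod_cast h5
  obtain ⟨y, hy1, hy2⟩ := ekeland_aux g hlscg hg0 σ hσpos xb
  have hdy : dist y xb ≤ lam := by
    have h1 : σ * dist y xb ≤ c := by
      have := hg0 y
      rw [hgxb] at hy1
      linarith
    rw [hσdef] at h1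
    rw [div_mul_eq_mul_div, div_le_iff₀ hlam_pos] at h1
    nlinarith [dist_nonneg (x := y) (y := xb)]
  have hfy : f y ≤ f xb := by
    rcases eq_or_ne y xb with rfl | hyxb
    · exact le_refl _
    · have hd : 0 < dist y xb := dist_pos.mpr hyxb
      have hgy : g y < c := by
        rw [hgxb] at hy1
        nlinarith
      have hey : e y < (c : EReal) := by
        rw [← hg_coe y]
        exact_mod_cast hgy
      have hmax : max (f y) 0 < (c : EReal) := by
        rcases min_lt_iff.mp hey with h | h
        · exact h
        · exact absurd h (lt_irrefl _)
      exact le_of_lt (((le_max_left (f y) 0).trans_lt hmax).trans_le hc.le)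
  have hymem : y ∈ {x : X | edist x xb < D ∧ f x ≤ f xb} := by
    refine ⟨?_, hfy⟩
    rw [edist_dist]
    exact lt_of_le_of_lt (ENNReal.ofReal_le_ofReal hdy) hlamD
  have hfy_top : f y ≠ ⊤ := (hfy.trans_lt (lt_top_iff_ne_top.mpr htop)).ne
  have hstep : m ≤ ((σ : ℝ) : EReal) := by
    refine le_trans (iInf₂_le y hymem) (iSup₂_le ?_)
    intro u hu
    have hune : u ≠ y := hu
    have hd : 0 < dist y u := dist_pos.mpr (Ne.symm hune)
    rw [EReal.div_le_iff_le_mul (by exact_mod_cast hd) (EReal.coe_ne_top _)]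
    rcases eq_or_ne (max (f u) 0) ⊤ with hmt | hmt
    · rw [hmt, EReal.sub_top]; exact bot_le
    · have hmb : max (f u) 0 ≠ ⊥ :=
        ((by simp : (⊥ : EReal) < 0).trans_le (le_max_right _ _)).ne'
      set b := (max (f u) 0).toReal with hb
      have hbco : (b : EReal) = max (f u) 0 := EReal.coe_toReal hmt hmb
      set a := (f y).toReal with ha
      have haco : (a : EReal) = f y := EReal.coe_toReal hfy_top (hbot y)
      have hfyc : f y ≤ (c : EReal) := hfy.trans_eq hc.symm
      have h6 : f y ≤ e y := le_min (le_max_left _ _) hfyc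
      have hag : a ≤ g y := by
        have h : ((a : ℝ) : EReal) ≤ ((g y : ℝ) : EReal) := by rw [haco, hg_coe]; exact h6
        exact_mod_cast h
      have hgb : g u ≤ b := by
        have h : ((g u : ℝ) : EReal) ≤ ((b : ℝ) : EReal) := by rw [hg_coe, hbco]; exact min_le_left _ _
        exact_mod_cast h
      have h7 := hy2 u hune
      rw [dist_comm u y] at h7
      have h8 : a - b ≤ dist y u * σ := by nlinarith
      rw [← haco, ← hbco, ← EReal.coe_sub]
      calc ((a - b : ℝ) : EReal) ≤ ((dist y u * σ : ℝ) : EReal) := by exact_mod_cast h8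
        _ = ((dist y u : ℝ) : EReal) * ((σ : ℝ) : EReal) := EReal.coe_mul _ _
  exact absurd (hstep.trans_lt hsig_m) (lt_irrefl _)
end

section
/- Let X, Y₁, Y₂, Z be metric spaces, F₁ : X ⇒ Y₁, F₂ : X ⇒ Y₂, G : Y₁ × Y₂ ⇒ Z be multifunctions, and (x̄,ȳ₁,ȳ₂,z̄) be such that z̄ ∈ G(ȳ₁,ȳ₂) and (ȳ₁,ȳ₂) ∈ F₁(x̄) × F₂(x̄). If there exist a neighborhood U × V₁ × V₂ × W of (x̄,ȳ₁,ȳ₂,z̄) and τ > 0 such that d((x,y₁,y₂), R⁻¹(z)) ≤ τ·φ_R((x,y₁,y₂),z) for all (x,y₁,y₂,z) ∈ U × V₁ × V₂ × W, then there exist a neighborhood U′ × V₁′ × V₂′ × W′ of (x̄,ȳ₁,ȳ₂,z̄) and the same τ > 0 such that d(x, H⁻¹(z)) ≤ τ·d(z, G((F₁(x) ∩ V₁′) × (F₂(x) ∩ V₂′))) for all (x,z) ∈ U′ × W′. -/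
open Filter Set Metric
open scoped ENNReal Topology

/-- The multifunction `R(x,y₁,y₂) = G(y₁,y₂)` if `(y₁,y₂) ∈ F₁(x) × F₂(x)`, `∅` otherwise. -/
def auxMap {X Y₁ Y₂ Z : Type*} (F₁ : X → Set Y₁) (F₂ : X → Set Y₂)
    (G : Y₁ → Y₂ → Set Z) (p : X × Y₁ × Y₂) : Set Z :=
  {z | (p.2.1 ∈ F₁ p.1 ∧ p.2.2 ∈ F₂ p.1) ∧ z ∈ G p.2.1 p.2.2}

/-- The image of a set under a two-variable multifunction: `G(S) = ⋃_{(y₁,y₂) ∈ S} G(y₁,y₂)`. -/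
def imageG {Y₁ Y₂ Z : Type*} (G : Y₁ → Y₂ → Set Z) (S : Set (Y₁ × Y₂)) : Set Z :=
  ⋃ p ∈ S, G p.1 p.2

/-- The composition `H(x) = G(F₁(x) × F₂(x))`. -/
def compMap {X Y₁ Y₂ Z : Type*} (F₁ : X → Set Y₁) (F₂ : X → Set Y₂)
    (G : Y₁ → Y₂ → Set Z) (x : X) : Set Z :=
  imageG G (F₁ x ×ˢ F₂ x)

/-- The additive (extended) distance on `X × Y₁ × Y₂`. -/
noncomputable def addEdist {X Y₁ Y₂ : Type*} [MetricSpace X] [MetricSpace Y₁] [MetricSpace Y₂]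
    (p q : X × Y₁ × Y₂) : ℝ≥0∞ :=
  edist p.1 q.1 + edist p.2.1 q.2.1 + edist p.2.2 q.2.2

/-- Distance from a point to a set in the additive metric of `X × Y₁ × Y₂`
(`+∞` for the empty set). -/
noncomputable def addInfDist {X Y₁ Y₂ : Type*} [MetricSpace X] [MetricSpace Y₁] [MetricSpace Y₂]
    (p : X × Y₁ × Y₂) (S : Set (X × Y₁ × Y₂)) : ℝ≥0∞ :=
  ⨅ q ∈ S, addEdist p q

/-- The lower semicontinuous envelope `φ_F(w,z) = liminf_{w' → w} d(z, F w')`. -/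
noncomputable def lscEnv {W Z : Type*} [TopologicalSpace W] [MetricSpace Z]
    (F : W → Set Z) (w : W) (z : Z) : ℝ≥0∞ :=
  Filter.liminf (fun w' => EMetric.infEdist z (F w')) (𝓝 w)

/-- implication (i) ⇒ (ii) of Proposition 1. A local error bound for the
auxiliary multifunction `R` in terms of `φ_R` yields a local error bound for the
composition `H` in terms of localized images of `G`. -/
theorem error_bound_R_implies_error_bound_H
    {X Y₁ Y₂ Z : Type*} [MetricSpace X] [MetricSpace Y₁] [MetricSpace Y₂] [MetricSpace Z]
    (F₁ : X → Set Y₁) (F₂ : X → Set Y₂) (G : Y₁ → Y₂ → Set Z)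
    (xb : X) (yb₁ : Y₁) (yb₂ : Y₂) (zb : Z)
    (hzb : zb ∈ G yb₁ yb₂) (hy₁ : yb₁ ∈ F₁ xb) (hy₂ : yb₂ ∈ F₂ xb)
    (τ : ℝ) (hτ : 0 < τ)
    (hyp : ∃ U ∈ 𝓝 xb, ∃ V₁ ∈ 𝓝 yb₁, ∃ V₂ ∈ 𝓝 yb₂, ∃ W ∈ 𝓝 zb,
      ∀ x ∈ U, ∀ y₁ ∈ V₁, ∀ y₂ ∈ V₂, ∀ z ∈ W,
        addInfDist (x, y₁, y₂) (preImg (auxMap F₁ F₂ G) z) ≤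
          ENNReal.ofReal τ * lscEnv (auxMap F₁ F₂ G) ((x, y₁, y₂) : X × Y₁ × Y₂) z) :
    ∃ U' ∈ 𝓝 xb, ∃ V₁' ∈ 𝓝 yb₁, ∃ V₂' ∈ 𝓝 yb₂, ∃ W' ∈ 𝓝 zb,
      ∀ x ∈ U', ∀ z ∈ W',
        EMetric.infEdist x (preImg (compMap F₁ F₂ G) z) ≤
          ENNReal.ofReal τ * EMetric.infEdist z (imageG G ((F₁ x ∩ V₁') ×ˢ (F₂ x ∩ V₂'))) := by
  obtain ⟨U, hU, V₁, hV₁, V₂, hV₂, W, hW, hbound⟩ := hyp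
  refine ⟨U, hU, V₁, hV₁, V₂, hV₂, W, hW, fun x hx z hz => ?_⟩
  set c : ℝ≥0∞ := ENNReal.ofReal τ with hc
  have hc0 : c ≠ 0 := by simp [hc, ENNReal.ofReal_eq_zero, not_le, hτ]
  have hctop : c ≠ ⊤ := ENNReal.ofReal_ne_top
  -- key pointwise estimate
  have key : ∀ p ∈ (F₁ x ∩ V₁) ×ˢ (F₂ x ∩ V₂),
      EMetric.infEdist x (preImg (compMap F₁ F₂ G) z) ≤
        c * EMetric.infEdist z (G p.1 p.2) := by
    rintro ⟨y₁, y₂⟩ ⟨⟨hy₁F, hy₁V⟩, ⟨hy₂F, hy₂V⟩⟩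
    have step1 : EMetric.infEdist x (preImg (compMap F₁ F₂ G) z) ≤
        addInfDist (x, y₁, y₂) (preImg (auxMap F₁ F₂ G) z) := by
      refine le_iInf₂ fun q hq => ?_
      have hq' : z ∈ auxMap F₁ F₂ G q := hq
      obtain ⟨⟨h1, h2⟩, h3⟩ := hq'
      have hmem : q.1 ∈ preImg (compMap F₁ F₂ G) z := by
        refine Set.mem_biUnion (show q.2 ∈ F₁ q.1 ×ˢ F₂ q.1 from ⟨h1, h2⟩) h3
      calc EMetric.infEdist x (preImg (compMap F₁ F₂ G) z)
          ≤ edist x q.1 := EMetric.infEdist_le_edist_of_mem hmem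
        _ ≤ addEdist (x, y₁, y₂) q := le_add_of_le_of_nonneg
            (le_add_of_le_of_nonneg le_rfl zero_le) zero_le
    have step2 : addInfDist (x, y₁, y₂) (preImg (auxMap F₁ F₂ G) z) ≤
        c * lscEnv (auxMap F₁ F₂ G) ((x, y₁, y₂) : X × Y₁ × Y₂) z :=
      hbound x hx y₁ hy₁V y₂ hy₂V z hz
    have step3 : lscEnv (auxMap F₁ F₂ G) ((x, y₁, y₂) : X × Y₁ × Y₂) z ≤
        EMetric.infEdist z (G y₁ y₂) := by
      have heq : auxMap F₁ F₂ G ((x, y₁, y₂) : X × Y₁ × Y₂) = G y₁ y₂ := by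
        ext z'; simp [auxMap, hy₁F, hy₂F]
      have hfreq : ∃ᶠ w in 𝓝 ((x, y₁, y₂) : X × Y₁ × Y₂),
          EMetric.infEdist z (auxMap F₁ F₂ G w) ≤ EMetric.infEdist z (G y₁ y₂) := by
        refine Filter.Frequently.filter_mono ?_ (pure_le_nhds _)
        refine Filter.Eventually.frequently ?_
        rw [Filter.eventually_pure, heq]
      exact Filter.liminf_le_of_frequently_le hfreq
    calc EMetric.infEdist x (preImg (compMap F₁ F₂ G) z)
        ≤ c * lscEnv (auxMap F₁ F₂ G) ((x, y₁, y₂) : X × Y₁ × Y₂) z := step1.trans step2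
      _ ≤ c * EMetric.infEdist z (G y₁ y₂) := mul_le_mul_right step3 _
  have himg : EMetric.infEdist z (imageG G ((F₁ x ∩ V₁) ×ˢ (F₂ x ∩ V₂))) =
      ⨅ p ∈ (F₁ x ∩ V₁) ×ˢ (F₂ x ∩ V₂), EMetric.infEdist z (G p.1 p.2) := by
    simp [imageG, EMetric.infEdist, Metric.infEDist_iUnion]
  rw [himg, ENNReal.mul_iInf_of_ne hc0 hctop]
  refine le_iInf fun p => ?_
  rw [ENNReal.mul_iInf_of_ne hc0 hctop]
  exact le_iInf fun hp => key p hp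
end

section
/- Let X, Y₁, Y₂, Z be metric spaces, F₁ : X ⇒ Y₁, F₂ : X ⇒ Y₂, G : Y₁ × Y₂ ⇒ Z be multifunctions, and (x̄,ȳ₁,ȳ₂,z̄) be such that z̄ ∈ G(ȳ₁,ȳ₂) and (ȳ₁,ȳ₂) ∈ F₁(x̄) × F₂(x̄). If there exist a neighborhood U × V₁ × V₂ × W of (x̄,ȳ₁,ȳ₂,z̄) and τ > 0 such that d(x, H⁻¹(z)) ≤ τ·d(z, G((F₁(x) ∩ V₁) × (F₂(x) ∩ V₂))) for all (x,z) ∈ U × W, then there exists ε > 0 such that for every ρ ∈ (0,ε) and every (x,y₁,y₂,z) ∈ B(x̄,ε) × B(ȳ₁,ε) × B(ȳ₂,ε) × B(z̄,ε) with z ∈ G(y₁,y₂) and (y₁,y₂) ∈ F₁(x) × F₂(x), one has B(z, ρτ⁻¹) ⊆ H(B(x,ρ)). -/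
open Filter Set Metric
open scoped ENNReal Topology

/-- implication (ii) ⇒ (iii) of Proposition 1. A localized error bound for
the composition `H` yields openness at linear rate `τ⁻¹` at points of the graph of the
composition near the reference point. -/
theorem error_bound_H_implies_openness
    {X Y₁ Y₂ Z : Type*} [MetricSpace X] [MetricSpace Y₁] [MetricSpace Y₂] [MetricSpace Z]
    (F₁ : X → Set Y₁) (F₂ : X → Set Y₂) (G : Y₁ → Y₂ → Set Z)
    (xb : X) (yb₁ : Y₁) (yb₂ : Y₂) (zb : Z)
    (hzb : zb ∈ G yb₁ yb₂) (hy₁ : yb₁ ∈ F₁ xb) (hy₂ : yb₂ ∈ F₂ xb)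
    (τ : ℝ) (hτ : 0 < τ)
    (hyp : ∃ U ∈ 𝓝 xb, ∃ V₁ ∈ 𝓝 yb₁, ∃ V₂ ∈ 𝓝 yb₂, ∃ W ∈ 𝓝 zb,
      ∀ x ∈ U, ∀ z ∈ W,
        EMetric.infEdist x (preImg (compMap F₁ F₂ G) z) ≤
          ENNReal.ofReal τ * EMetric.infEdist z (imageG G ((F₁ x ∩ V₁) ×ˢ (F₂ x ∩ V₂)))) :
    ∃ ε > (0 : ℝ), ∀ ρ : ℝ, 0 < ρ → ρ < ε →
      ∀ x ∈ ball xb ε, ∀ y₁ ∈ ball yb₁ ε, ∀ y₂ ∈ ball yb₂ ε, ∀ z ∈ ball zb ε,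
        z ∈ G y₁ y₂ → y₁ ∈ F₁ x → y₂ ∈ F₂ x →
          ball z (ρ * τ⁻¹) ⊆ setImage (compMap F₁ F₂ G) (ball x ρ) := by
  obtain ⟨U, hU, V₁, hV₁, V₂, hV₂, W, hW, hbound⟩ := hyp
  obtain ⟨rU, hrU, hUb⟩ := Metric.mem_nhds_iff.mp hU
  obtain ⟨r1, hr1, hV1b⟩ := Metric.mem_nhds_iff.mp hV₁
  obtain ⟨r2, hr2, hV2b⟩ := Metric.mem_nhds_iff.mp hV₂
  obtain ⟨rW, hrW, hWb⟩ := Metric.mem_nhds_iff.mp hW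
  set r := min (min rU r1) (min r2 rW) with hrdef
  have hrpos : 0 < r := lt_min (lt_min hrU hr1) (lt_min hr2 hrW)
  set ε := r * τ / (τ + 1) with hεdef
  have hτ1 : 0 < τ + 1 := by linarith
  have hεpos : 0 < ε := by positivity
  have hεr : ε < r := by
    rw [hεdef, div_lt_iff₀ hτ1]
    nlinarith
  refine ⟨ε, hεpos, ?_⟩
  intro ρ hρ hρε x hx y₁ hy₁b y₂ hy₂b z hz hzG hF1 hF2 w hw
  rw [mem_ball] at hw hx hy₁b hy₂b hz
  have hxU : x ∈ U := hUb (by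
    rw [mem_ball]
    calc dist x xb < ε := hx
      _ < r := hεr
      _ ≤ rU := (min_le_left _ _).trans (min_le_left _ _))
  have hεsum : ε * τ⁻¹ + ε = r := by
    have h1τ : τ + 1 ≠ 0 := hτ1.ne'
    rw [hεdef]
    field_simp
    ring
  have hwW : w ∈ W := hWb (by
    rw [mem_ball]
    calc dist w zb ≤ dist w z + dist z zb := dist_triangle _ _ _
      _ < ρ * τ⁻¹ + ε := add_lt_add hw hz
      _ < ε * τ⁻¹ + ε := by
          have : ρ * τ⁻¹ < ε * τ⁻¹ := by
            apply mul_lt_mul_of_pos_right hρε (by positivity)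
          linarith
      _ = r := hεsum
      _ ≤ rW := (min_le_right _ _).trans (min_le_right _ _))
  have key := hbound x hxU w hwW
  have hzS : z ∈ imageG G ((F₁ x ∩ V₁) ×ˢ (F₂ x ∩ V₂)) := by
    refine mem_iUnion₂.mpr ⟨(y₁, y₂), ⟨⟨hF1, ?_⟩, ⟨hF2, ?_⟩⟩, hzG⟩
    · exact hV1b (by rw [mem_ball]; calc dist y₁ yb₁ < ε := hy₁b
        _ < r := hεr
        _ ≤ r1 := (min_le_left _ _).trans (min_le_right _ _))
    · exact hV2b (by rw [mem_ball]; calc dist y₂ yb₂ < ε := hy₂b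
        _ < r := hεr
        _ ≤ r2 := (min_le_right _ _).trans (min_le_left _ _))
  have h1 : EMetric.infEdist w (imageG G ((F₁ x ∩ V₁) ×ˢ (F₂ x ∩ V₂))) ≤ edist w z :=
    EMetric.infEdist_le_edist_of_mem hzS
  have h2 : edist w z < ENNReal.ofReal (ρ * τ⁻¹) := by
    rw [edist_dist]
    exact (ENNReal.ofReal_lt_ofReal_iff (by positivity)).mpr hw
  have h3 : EMetric.infEdist x (preImg (compMap F₁ F₂ G) w) < ENNReal.ofReal ρ := by
    calc EMetric.infEdist x (preImg (compMap F₁ F₂ G) w)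
        ≤ ENNReal.ofReal τ * edist w z := key.trans (by gcongr)
      _ < ENNReal.ofReal τ * ENNReal.ofReal (ρ * τ⁻¹) := by
          rw [ENNReal.mul_lt_mul_iff_right (ENNReal.ofReal_pos.mpr hτ).ne' ENNReal.ofReal_ne_top]
          exact h2
      _ = ENNReal.ofReal ρ := by
          rw [← ENNReal.ofReal_mul hτ.le]
          congr 1
          field_simp
  obtain ⟨x', hx', hdx⟩ := EMetric.infEdist_lt_iff.mp h3
  refine mem_iUnion₂.mpr ⟨x', ?_, hx'⟩
  rw [mem_ball']
  rw [edist_dist, ENNReal.ofReal_lt_ofReal_iff hρ] at hdx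
  exact hdx
end

section
/- Let X, Y₁, Y₂, Z be metric spaces, F₁ : X ⇒ Y₁, F₂ : X ⇒ Y₂ and G : Y₁ × Y₂ ⇒ Z be multifunctions, and (x̄,ȳ₁,ȳ₂,z̄) ∈ X × Y₁ × Y₂ × Z be such that z̄ ∈ G(ȳ₁,ȳ₂), F₁(x̄) = {ȳ₁}, F₂(x̄) = {ȳ₂}, and F₁, F₂ are upper semicontinuous at x̄. Then (F₁,F₂) and G are locally composition-stable around (x̄,(ȳ₁,ȳ₂),z̄). -/
open Filter Set Metric
open scoped ENNReal Topology

/-- Upper semicontinuity of a multifunction at a point. -/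
def USCAt {X Y : Type*} [MetricSpace X] [MetricSpace Y] (F : X → Set Y) (x₀ : X) : Prop :=
  ∀ V : Set Y, IsOpen V → F x₀ ⊆ V → ∃ δ > (0 : ℝ), ∀ x ∈ ball x₀ δ, F x ⊆ V

/-- `(F₁,F₂)` and `G` are locally composition-stable around `(xb,(yb₁,yb₂),zb)`. -/
def CompStable {X Y₁ Y₂ Z : Type*} [MetricSpace X] [MetricSpace Y₁] [MetricSpace Y₂]
    [MetricSpace Z] (F₁ : X → Set Y₁) (F₂ : X → Set Y₂) (G : Y₁ → Y₂ → Set Z)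
    (xb : X) (yb₁ : Y₁) (yb₂ : Y₂) (zb : Z) : Prop :=
  ∀ ε > (0 : ℝ), ∃ δ > (0 : ℝ), ∀ x ∈ ball xb δ,
    ∀ z ∈ compMap F₁ F₂ G x ∩ ball zb δ,
      ∃ y₁ ∈ F₁ x ∩ ball yb₁ ε, ∃ y₂ ∈ F₂ x ∩ ball yb₂ ε, z ∈ G y₁ y₂

/-- If `F₁(xb) = {yb₁}`, `F₂(xb) = {yb₂}` and `F₁, F₂` are upper
semicontinuous at `xb`, then `(F₁,F₂)` and `G` are locally composition-stable around
`(xb,(yb₁,yb₂),zb)`. -/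
theorem usc_implies_composition_stable
    {X Y₁ Y₂ Z : Type*} [MetricSpace X] [MetricSpace Y₁] [MetricSpace Y₂] [MetricSpace Z]
    (F₁ : X → Set Y₁) (F₂ : X → Set Y₂) (G : Y₁ → Y₂ → Set Z)
    (xb : X) (yb₁ : Y₁) (yb₂ : Y₂) (zb : Z)
    (hzb : zb ∈ G yb₁ yb₂)
    (hF₁ : F₁ xb = {yb₁}) (hF₂ : F₂ xb = {yb₂})
    (hu₁ : USCAt F₁ xb) (hu₂ : USCAt F₂ xb) :
    CompStable F₁ F₂ G xb yb₁ yb₂ zb := by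
  intro ε hε
  obtain ⟨δ₁, hδ₁, h1⟩ := hu₁ (ball yb₁ ε) isOpen_ball (by rw [hF₁]; simp [mem_ball_self hε])
  obtain ⟨δ₂, hδ₂, h2⟩ := hu₂ (ball yb₂ ε) isOpen_ball (by rw [hF₂]; simp [mem_ball_self hε])
  refine ⟨min δ₁ δ₂, lt_min hδ₁ hδ₂, fun x hx z hz => ?_⟩
  obtain ⟨hz, -⟩ := hz
  obtain ⟨p, hp, hzp⟩ := mem_iUnion₂.1 hz
  obtain ⟨hp1, hp2⟩ := hp
  have hx1 : x ∈ ball xb δ₁ := ball_subset_ball (min_le_left _ _) hx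
  have hx2 : x ∈ ball xb δ₂ := ball_subset_ball (min_le_right _ _) hx
  exact ⟨p.1, ⟨hp1, h1 x hx1 hp1⟩, p.2, ⟨hp2, h2 x hx2 hp2⟩, hzp⟩
end

section
/- Let X, Y₁, Y₂, Z be metric spaces, F₁ : X ⇒ Y₁, F₂ : X ⇒ Y₂ be multifunctions, G : Y₁ × Y₂ → Z a single-valued map, and (x̄,ȳ₁,ȳ₂,z̄) be such that z̄ = G(ȳ₁,ȳ₂) and (ȳ₁,ȳ₂) ∈ F₁(x̄) × F₂(x̄). Assume: (i) F₁(x̄) = {ȳ₁} and F₁ is upper semicontinuous at x̄; (ii) the map y₁ ↦ G(y₁,ȳ₂) is continuous at ȳ₁; (iii) there is a neighborhood of ȳ₁ such that for every y₁ in it, the map y₂ ↦ G(y₁,y₂) is an isometry (d(G(y₁,y₂), G(y₁,y₂′)) = d(y₂,y₂′) for all y₂,y₂′). Then (F₁,F₂) and G are locally composition-stable around (x̄,(ȳ₁,ȳ₂),z̄). -/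
open Filter Set Metric
open scoped ENNReal Topology

/-- Let `G` be a single-valued map (identified with the multifunction
`(y₁,y₂) ↦ {G (y₁,y₂)}`). If `F₁(xb) = {yb₁}` with `F₁` upper semicontinuous at `xb`,
`G(·,yb₂)` is continuous at `yb₁`, and `G(y₁,·)` is an isometry for all `y₁` near `yb₁`,
then `(F₁,F₂)` and `G` are locally composition-stable around `(xb,(yb₁,yb₂),zb)`. -/
theorem single_valued_G_composition_stable
    {X Y₁ Y₂ Z : Type*} [MetricSpace X] [MetricSpace Y₁] [MetricSpace Y₂] [MetricSpace Z]
    (F₁ : X → Set Y₁) (F₂ : X → Set Y₂) (G : Y₁ × Y₂ → Z)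
    (xb : X) (yb₁ : Y₁) (yb₂ : Y₂) (zb : Z)
    (hzb : zb = G (yb₁, yb₂)) (hy₁ : yb₁ ∈ F₁ xb) (hy₂ : yb₂ ∈ F₂ xb)
    (hF₁ : F₁ xb = {yb₁}) (hu₁ : USCAt F₁ xb)
    (hcont : ContinuousAt (fun y₁ => G (y₁, yb₂)) yb₁)
    (hiso : ∃ r > (0 : ℝ), ∀ y₁ ∈ ball yb₁ r, ∀ y₂ y₂' : Y₂,
      dist (G (y₁, y₂)) (G (y₁, y₂')) = dist y₂ y₂') :
    CompStable F₁ F₂ (fun y₁ y₂ => {G (y₁, y₂)}) xb yb₁ yb₂ zb := by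
  obtain ⟨r, hr, hisor⟩ := hiso
  intro ε hε
  -- continuity: choose ε' so that dist yb₁ y₁ < ε' implies dist (G (y₁,yb₂)) zb < ε/2
  have hcont' := Metric.continuousAt_iff.mp hcont (ε/2) (by linarith)
  obtain ⟨ε', hε', hGcont⟩ := hcont'
  set ρ := min ε (min r ε') with hρdef
  have hρ : 0 < ρ := lt_min hε (lt_min hr hε')
  obtain ⟨δ₁, hδ₁, husc⟩ := hu₁ (ball yb₁ ρ) isOpen_ball
    (by rw [hF₁]; exact singleton_subset_iff.mpr (mem_ball_self hρ))
  refine ⟨min δ₁ (ε/2), lt_min hδ₁ (by linarith), ?_⟩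
  intro x hx z hz
  obtain ⟨hzH, hzb'⟩ := hz
  simp only [compMap, imageG, mem_iUnion, mem_prod, mem_singleton_iff] at hzH
  obtain ⟨p, ⟨hp1, hp2⟩, hzp⟩ := hzH
  rw [hzp]
  have hxball : x ∈ ball xb δ₁ := mem_ball.mpr (lt_of_lt_of_le (mem_ball.mp hx) (min_le_left _ _))
  have hy1ball : p.1 ∈ ball yb₁ ρ := husc x hxball hp1
  have hy1r : p.1 ∈ ball yb₁ r :=
    mem_ball.mpr (lt_of_lt_of_le (mem_ball.mp hy1ball) (le_trans (min_le_right _ _) (min_le_left _ _)))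
  have hy1ε : dist p.1 yb₁ < ε := lt_of_lt_of_le (mem_ball.mp hy1ball) (min_le_left _ _)
  have hy1ε' : dist p.1 yb₁ < ε' :=
    lt_of_lt_of_le (mem_ball.mp hy1ball) (le_trans (min_le_right _ _) (min_le_right _ _))
  have hGnear : dist (G (p.1, yb₂)) zb < ε/2 := by
    have := hGcont hy1ε'
    simpa [hzb] using this
  have hzdist : dist z zb < ε/2 :=
    lt_of_lt_of_le (mem_ball.mp hzb') (min_le_right _ _)
  have hy2 : dist p.2 yb₂ < ε := by
    have hiso2 := hisor p.1 hy1r p.2 yb₂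
    calc dist p.2 yb₂ = dist (G (p.1, p.2)) (G (p.1, yb₂)) := hiso2.symm
      _ ≤ dist (G (p.1, p.2)) zb + dist zb (G (p.1, yb₂)) := dist_triangle _ _ _
      _ < ε/2 + ε/2 := by
          rw [← hzp, dist_comm zb]
          exact add_lt_add hzdist hGnear
      _ = ε := by ring
  exact ⟨p.1, ⟨hp1, mem_ball.mpr hy1ε⟩, p.2, ⟨hp2, mem_ball.mpr hy2⟩, rfl⟩
end

section
/- Let X, Y₁, Y₂, Z be metric spaces, F₁ : X ⇒ Y₁, F₂ : X ⇒ Y₂, G : Y₁ × Y₂ ⇒ Z be multifunctions, and (x̄,ȳ₁,ȳ₂,z̄) be such that z̄ ∈ G(ȳ₁,ȳ₂) and (ȳ₁,ȳ₂) ∈ F₁(x̄) × F₂(x̄). Suppose there exist δ > 0 and τ > 0 such that d(x, H⁻¹(z)) ≤ τ·d(z, G((F₁(x) ∩ B(ȳ₁,δ)) × (F₂(x) ∩ B(ȳ₂,δ)))) for all (x,z) ∈ B(x̄,δ) × B(z̄,δ), and that (F₁,F₂) and G are locally composition-stable around (x̄,(ȳ₁,ȳ₂),z̄). Then H is metrically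 regular around (x̄,z̄) with constant τ, i.e. there exist neighborhoods U of x̄ and W of z̄ such that d(x,H⁻¹(z)) ≤ τ·d(z,H(x)) for all (x,z) ∈ U × W. -/
open Filter Set Metric
open scoped ENNReal Topology

/-- Proposition 4. A localized error bound for the composition `H`
together with local composition-stability yields metric regularity of `H` around
`(xb, zb)` with constant `τ`. -/
theorem composition_stability_implies_metric_regularity
    {X Y₁ Y₂ Z : Type*} [MetricSpace X] [MetricSpace Y₁] [MetricSpace Y₂] [MetricSpace Z]
    (F₁ : X → Set Y₁) (F₂ : X → Set Y₂) (G : Y₁ → Y₂ → Set Z)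
    (xb : X) (yb₁ : Y₁) (yb₂ : Y₂) (zb : Z)
    (hzb : zb ∈ G yb₁ yb₂) (hy₁ : yb₁ ∈ F₁ xb) (hy₂ : yb₂ ∈ F₂ xb)
    (δ τ : ℝ) (hδ : 0 < δ) (hτ : 0 < τ)
    (hyp : ∀ x ∈ ball xb δ, ∀ z ∈ ball zb δ,
      EMetric.infEdist x (preImg (compMap F₁ F₂ G) z) ≤
        ENNReal.ofReal τ *
          EMetric.infEdist z (imageG G ((F₁ x ∩ ball yb₁ δ) ×ˢ (F₂ x ∩ ball yb₂ δ))))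
    (hstab : CompStable F₁ F₂ G xb yb₁ yb₂ zb) :
    ∃ U ∈ 𝓝 xb, ∃ W ∈ 𝓝 zb, ∀ x ∈ U, ∀ z ∈ W,
      EMetric.infEdist x (preImg (compMap F₁ F₂ G) z) ≤
        ENNReal.ofReal τ * EMetric.infEdist z (compMap F₁ F₂ G x) := by
  obtain ⟨δ', hδ'pos, hstab'⟩ := hstab δ hδ
  set δ'' := min δ' δ with hδ''def
  have hδ''pos : 0 < δ'' := lt_min hδ'pos hδ
  have hδ''le' : δ'' ≤ δ' := min_le_left _ _
  have hδ''leδ : δ'' ≤ δ := min_le_right _ _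
  set r := δ'' / 4 with hrdef
  set ρ := δ'' / 8 with hρdef
  set σ := min δ'' (τ * δ'' / 8) with hσdef
  have hrpos : 0 < r := by positivity
  have hρpos : 0 < ρ := by positivity
  have hσpos : 0 < σ := lt_min hδ''pos (by positivity)
  refine ⟨ball xb σ, ball_mem_nhds _ hσpos, ball zb ρ, ball_mem_nhds _ hρpos, ?_⟩
  intro x hx z hz
  have hxσ : dist x xb < σ := mem_ball.mp hx
  have hzρ : dist z zb < ρ := mem_ball.mp hz
  have hxδ : x ∈ ball xb δ := mem_ball.mpr (lt_of_lt_of_le hxσ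
    (le_trans (min_le_left _ _) hδ''leδ))
  have hzδ : z ∈ ball zb δ := mem_ball.mpr (lt_of_lt_of_le hzρ
    (le_trans (by linarith : ρ ≤ δ'') hδ''leδ))
  by_cases hcase : EMetric.infEdist z (compMap F₁ F₂ G x) < ENNReal.ofReal r
  · -- near case: the restricted image captures the infimum
    have key : EMetric.infEdist z (imageG G ((F₁ x ∩ ball yb₁ δ) ×ˢ (F₂ x ∩ ball yb₂ δ))) ≤
        EMetric.infEdist z (compMap F₁ F₂ G x) := by
      refine ENNReal.le_of_forall_pos_le_add fun ε hε hfin => ?_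
      set B := EMetric.infEdist z (compMap F₁ F₂ G x) with hB
      have hc : B < min (B + ε) (ENNReal.ofReal r) := by
        refine lt_min ?_ hcase
        exact ENNReal.lt_add_right (ne_of_lt hfin) (by exact_mod_cast hε.ne')
      obtain ⟨z', hz'H, hz'lt⟩ := EMetric.infEdist_lt_iff.mp hc
      have hz'r : dist z z' < r :=
        edist_lt_ofReal.mp (lt_of_lt_of_le hz'lt (min_le_right _ _))
      have hz'zb : z' ∈ ball zb δ' := by
        refine mem_ball.mpr (lt_of_lt_of_le ?_ hδ''le')
        calc dist z' zb ≤ dist z' z + dist z zb := dist_triangle _ _ _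
          _ < r + ρ := by rw [dist_comm]; exact add_lt_add hz'r hzρ
          _ ≤ δ'' := by rw [hrdef, hρdef]; linarith
      have hxδ' : x ∈ ball xb δ' := mem_ball.mpr (lt_of_lt_of_le hxσ
        (le_trans (min_le_left _ _) hδ''le'))
      obtain ⟨y₁, hy₁m, y₂, hy₂m, hz'G⟩ := hstab' x hxδ' z' ⟨hz'H, hz'zb⟩
      have hz'res : z' ∈ imageG G ((F₁ x ∩ ball yb₁ δ) ×ˢ (F₂ x ∩ ball yb₂ δ)) := by
        exact mem_iUnion₂.mpr ⟨(y₁, y₂), ⟨hy₁m, hy₂m⟩, hz'G⟩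
      calc EMetric.infEdist z (imageG G ((F₁ x ∩ ball yb₁ δ) ×ˢ (F₂ x ∩ ball yb₂ δ)))
          ≤ edist z z' := EMetric.infEdist_le_edist_of_mem hz'res
        _ ≤ B + ε := le_of_lt (lt_of_lt_of_le hz'lt (min_le_left _ _))
    calc EMetric.infEdist x (preImg (compMap F₁ F₂ G) z)
        ≤ ENNReal.ofReal τ *
          EMetric.infEdist z (imageG G ((F₁ x ∩ ball yb₁ δ) ×ˢ (F₂ x ∩ ball yb₂ δ))) :=
          hyp x hxδ z hzδ
      _ ≤ ENNReal.ofReal τ * EMetric.infEdist z (compMap F₁ F₂ G x) :=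
          mul_le_mul_right key _
  · -- far case: go through xb
    push_neg at hcase
    have hzbres : zb ∈ imageG G ((F₁ xb ∩ ball yb₁ δ) ×ˢ (F₂ xb ∩ ball yb₂ δ)) :=
      mem_iUnion₂.mpr ⟨(yb₁, yb₂), ⟨⟨hy₁, mem_ball_self hδ⟩, ⟨hy₂, mem_ball_self hδ⟩⟩, hzb⟩
    have h1 : EMetric.infEdist xb (preImg (compMap F₁ F₂ G) z) ≤
        ENNReal.ofReal τ * edist z zb :=
      le_trans (hyp xb (mem_ball_self hδ) z hzδ)
        (mul_le_mul_right (EMetric.infEdist_le_edist_of_mem hzbres) _)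
    have h2 : EMetric.infEdist x (preImg (compMap F₁ F₂ G) z) ≤
        edist x xb + ENNReal.ofReal τ * edist z zb :=
      le_trans (EMetric.infEdist_le_edist_add_infEdist) (add_le_add le_rfl h1)
    have h3 : edist x xb + ENNReal.ofReal τ * edist z zb ≤ ENNReal.ofReal (τ * r) := by
      have hex : edist x xb ≤ ENNReal.ofReal σ := by
        rw [edist_dist]; exact ENNReal.ofReal_le_ofReal hxσ.le
      have hez : edist z zb ≤ ENNReal.ofReal ρ := by
        rw [edist_dist]; exact ENNReal.ofReal_le_ofReal hzρ.le
      calc edist x xb + ENNReal.ofReal τ * edist z zb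
          ≤ ENNReal.ofReal σ + ENNReal.ofReal τ * ENNReal.ofReal ρ :=
            add_le_add hex (mul_le_mul_right hez _)
        _ = ENNReal.ofReal (σ + τ * ρ) := by
            rw [← ENNReal.ofReal_mul hτ.le, ← ENNReal.ofReal_add hσpos.le (by positivity)]
        _ ≤ ENNReal.ofReal (τ * r) := by
            refine ENNReal.ofReal_le_ofReal ?_
            have hσle : σ ≤ τ * δ'' / 8 := min_le_right _ _
            rw [hrdef, hρdef]; nlinarith
    calc EMetric.infEdist x (preImg (compMap F₁ F₂ G) z)
        ≤ ENNReal.ofReal (τ * r) := le_trans h2 h3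
      _ = ENNReal.ofReal τ * ENNReal.ofReal r := ENNReal.ofReal_mul hτ.le
      _ ≤ ENNReal.ofReal τ * EMetric.infEdist z (compMap F₁ F₂ G x) :=
          mul_le_mul_right hcase _
end

section
/- Let X, Y₁, Y₂, Z be metric spaces, F₁ : X ⇒ Y₁, F₂ : X ⇒ Y₂, G : Y₁ × Y₂ ⇒ Z be multifunctions, and (x̄,ȳ₁,ȳ₂,z̄) be such that z̄ ∈ G(ȳ₁,ȳ₂), F₁(x̄) = {ȳ₁}, F₂(x̄) = {ȳ₂}, and F₁, F₂ are upper semicontinuous at x̄. If there exist δ > 0 and τ > 0 such that d(x, H⁻¹(z)) ≤ τ·d(z, G((F₁(x) ∩ B(ȳ₁,δ)) × (F₂(x) ∩ B(ȳ₂,δ)))) for all (x,z) ∈ B(x̄,δ) × B(z̄,δ), then H is metrically regular around (x̄,z̄) with constant τ, i.e. there exist neighborhoods U of x̄ and W of z̄ such that d(x,H⁻¹(z)) ≤ τ·d(z,H(x)) for all (x,z) ∈ U × W. -/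
open Filter Set Metric
open scoped ENNReal Topology

/-- second part of Proposition 4. If `F₁(xb) = {yb₁}`, `F₂(xb) = {yb₂}`,
`F₁, F₂` are upper semicontinuous at `xb` and the localized error bound holds, then the
composition `H` is metrically regular around `(xb, zb)` with constant `τ`. -/
theorem usc_and_error_bound_imply_metric_regularity
    {X Y₁ Y₂ Z : Type*} [MetricSpace X] [MetricSpace Y₁] [MetricSpace Y₂] [MetricSpace Z]
    (F₁ : X → Set Y₁) (F₂ : X → Set Y₂) (G : Y₁ → Y₂ → Set Z)
    (xb : X) (yb₁ : Y₁) (yb₂ : Y₂) (zb : Z)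
    (hzb : zb ∈ G yb₁ yb₂)
    (hF₁ : F₁ xb = {yb₁}) (hF₂ : F₂ xb = {yb₂})
    (hu₁ : USCAt F₁ xb) (hu₂ : USCAt F₂ xb)
    (δ τ : ℝ) (hδ : 0 < δ) (hτ : 0 < τ)
    (hyp : ∀ x ∈ ball xb δ, ∀ z ∈ ball zb δ,
      EMetric.infEdist x (preImg (compMap F₁ F₂ G) z) ≤
        ENNReal.ofReal τ *
          EMetric.infEdist z (imageG G ((F₁ x ∩ ball yb₁ δ) ×ˢ (F₂ x ∩ ball yb₂ δ)))) :
    ∃ U ∈ 𝓝 xb, ∃ W ∈ 𝓝 zb, ∀ x ∈ U, ∀ z ∈ W,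
      EMetric.infEdist x (preImg (compMap F₁ F₂ G) z) ≤
        ENNReal.ofReal τ * EMetric.infEdist z (compMap F₁ F₂ G x) := by
  obtain ⟨δ₁, hδ₁, h₁⟩ := hu₁ (ball yb₁ δ) isOpen_ball (hF₁ ▸ singleton_subset_iff.2 (mem_ball_self hδ))
  obtain ⟨δ₂, hδ₂, h₂⟩ := hu₂ (ball yb₂ δ) isOpen_ball (hF₂ ▸ singleton_subset_iff.2 (mem_ball_self hδ))
  refine ⟨ball xb (min δ (min δ₁ δ₂)), ball_mem_nhds _ (by positivity),
    ball zb δ, ball_mem_nhds _ hδ, fun x hx z hz => ?_⟩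
  have hxδ : x ∈ ball xb δ := ball_subset_ball (min_le_left _ _) hx
  have hx₁ : F₁ x ⊆ ball yb₁ δ :=
    h₁ x (ball_subset_ball ((min_le_right _ _).trans (min_le_left _ _)) hx)
  have hx₂ : F₂ x ⊆ ball yb₂ δ :=
    h₂ x (ball_subset_ball ((min_le_right _ _).trans (min_le_right _ _)) hx)
  have := hyp x hxδ z hz
  rwa [inter_eq_self_of_subset_left hx₁, inter_eq_self_of_subset_left hx₂] at this
end

section
/- Let X, Y₁, Y₂ be complete metric spaces and Z a metric space. Let F₁ : X ⇒ Y₁, F₂ : X ⇒ Y₂, G : Y₁ × Y₂ ⇒ Z be closed-graph multifunctions and (x̄,ȳ₁,ȳ₂,z̄) with (x̄,ȳ₁) ∈ Gr F₁, (x̄,ȳ₂) ∈ Gr F₂, ((ȳ₁,ȳ₂),z̄) ∈ Gr G. Assume: (i) F₁ is metrically regular around (x̄,ȳ₁); (ii) F₂ has the Aubin property around (x̄,ȳ₂); (iii) G is metrically regular with respect to y₁ uniformly in y₂ around ((ȳ₁,ȳ₂),z̄); (iv) G has the Aubin property with respect to y₂ uniformly in y₁ around ((ȳ₁,ȳ₂),z̄);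 (v) 0 < reg F₁(x̄,ȳ₁)·lip F₂(x̄,ȳ₂)·reĝ_{y₁}G((ȳ₁,ȳ₂),z̄)·lip̂_{y₂}G((ȳ₁,ȳ₂),z̄) < 1. Set ρ₀ := (reg F₁(x̄,ȳ₁)·reĝ_{y₁}G((ȳ₁,ȳ₂),z̄)) / (1 − reg F₁(x̄,ȳ₁)·lip F₂(x̄,ȳ₂)·reĝ_{y₁}G((ȳ₁,ȳ₂),z̄)·lip̂_{y₂}G((ȳ₁,ȳ₂),z̄)). Then for every ρ > ρ₀ there exist constants m, l > 0, a neighborhood U × V₁ × V₂ × W of (x̄,ȳ₁,ȳ₂,z̄), such that, with the metric d₀((x,y₁,y₂),(u,v₁,v₂)) := max{d(x,u), m·d(y₁,v₁), l⁻¹·d(y₂,v₂)} on X × Y₁ × Y₂, one has d₀((x,y₁,y₂), R⁻¹(z)) ≤ ρ·φ_R((x,y₁,y₂),z) for all (x,y₁,y₂,z) ∈ U × V₁ × V₂ × W (where distances to sets and φ_R are computed with respect to d₀); in particular R is metrically regular around ((x̄,ȳ₁,ȳ₂),z̄) with respect to d₀ and reg R((x̄,ȳ₁,ȳ₂),z̄)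 ≤ ρ₀. -/
open Filter Set Metric
open scoped ENNReal Topology

/-- `G` is metrically regular with respect to `y₁` uniformly in `y₂` around
`((y₁₀,y₂₀), z₀)` with constant `L > 0`. -/
def MetRegPartial1 {Y₁ Y₂ Z : Type*} [MetricSpace Y₁] [MetricSpace Y₂] [MetricSpace Z]
    (G : Y₁ → Y₂ → Set Z) (y₁₀ : Y₁) (y₂₀ : Y₂) (z₀ : Z) (L : ℝ) : Prop :=
  ∃ V₁ ∈ 𝓝 y₁₀, ∃ V₂ ∈ 𝓝 y₂₀, ∃ W ∈ 𝓝 z₀,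
    ∀ y₁ ∈ V₁, ∀ y₂ ∈ V₂, ∀ z ∈ W,
      EMetric.infEdist y₁ {y | z ∈ G y y₂} ≤ ENNReal.ofReal L * EMetric.infEdist z (G y₁ y₂)

/-- `G` has the Aubin property with respect to `y₂` uniformly in `y₁` around
`((y₁₀,y₂₀), z₀)` with constant `L > 0`. -/
def AubinPartial2 {Y₁ Y₂ Z : Type*} [MetricSpace Y₁] [MetricSpace Y₂] [MetricSpace Z]
    (G : Y₁ → Y₂ → Set Z) (y₁₀ : Y₁) (y₂₀ : Y₂) (z₀ : Z) (L : ℝ) : Prop :=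
  ∃ V₁ ∈ 𝓝 y₁₀, ∃ V₂ ∈ 𝓝 y₂₀, ∃ W ∈ 𝓝 z₀,
    ∀ y₁ ∈ V₁, ∀ y₂ ∈ V₂, ∀ y₂' ∈ V₂,
      excess (G y₁ y₂ ∩ W) (G y₁ y₂') ≤ ENNReal.ofReal (L * dist y₂ y₂')

/-- The exact partial regularity bound `reĝ_{y₁} G((y₁₀,y₂₀),z₀)`. -/
noncomputable def regHat1Mod {Y₁ Y₂ Z : Type*} [MetricSpace Y₁] [MetricSpace Y₂]
    [MetricSpace Z] (G : Y₁ → Y₂ → Set Z) (y₁₀ : Y₁) (y₂₀ : Y₂) (z₀ : Z) : ℝ≥0∞ :=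
  sInf {l : ℝ≥0∞ | ∃ L : ℝ, 0 < L ∧ MetRegPartial1 G y₁₀ y₂₀ z₀ L ∧ l = ENNReal.ofReal L}

/-- The exact partial Lipschitz bound `lip̂_{y₂} G((y₁₀,y₂₀),z₀)`. -/
noncomputable def lipHat2Mod {Y₁ Y₂ Z : Type*} [MetricSpace Y₁] [MetricSpace Y₂]
    [MetricSpace Z] (G : Y₁ → Y₂ → Set Z) (y₁₀ : Y₁) (y₂₀ : Y₂) (z₀ : Z) : ℝ≥0∞ :=
  sInf {l : ℝ≥0∞ | ∃ L : ℝ, 0 < L ∧ AubinPartial2 G y₁₀ y₂₀ z₀ L ∧ l = ENNReal.ofReal L}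

/-- The (extended) metric `d₀((x,y₁,y₂),(u,v₁,v₂)) = max {d(x,u), m·d(y₁,v₁), l⁻¹·d(y₂,v₂)}`. -/
noncomputable def dzeroEdist {X Y₁ Y₂ : Type*} [MetricSpace X] [MetricSpace Y₁]
    [MetricSpace Y₂] (m l : ℝ) (p q : X × Y₁ × Y₂) : ℝ≥0∞ :=
  max (edist p.1 q.1)
    (max (ENNReal.ofReal m * edist p.2.1 q.2.1) ((ENNReal.ofReal l)⁻¹ * edist p.2.2 q.2.2))

/-- Distance from a point to a set with respect to `d₀` (`+∞` for the empty set). -/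
noncomputable def dzeroInfDist {X Y₁ Y₂ : Type*} [MetricSpace X] [MetricSpace Y₁]
    [MetricSpace Y₂] (m l : ℝ) (p : X × Y₁ × Y₂) (S : Set (X × Y₁ × Y₂)) : ℝ≥0∞ :=
  ⨅ q ∈ S, dzeroEdist m l p q


lemma metRegAround_mono {X Y : Type*} [MetricSpace X] [MetricSpace Y] {F : X → Set Y}
    {x₀ : X} {y₀ : Y} {L L' : ℝ} (h : MetRegAround F x₀ y₀ L) (hLL' : L ≤ L') :
    MetRegAround F x₀ y₀ L' := by
  obtain ⟨U, hU, V, hV, h⟩ := h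
  exact ⟨U, hU, V, hV, fun x hx y hy => (h x hx y hy).trans
    (mul_le_mul_left (ENNReal.ofReal_le_ofReal hLL') _)⟩

lemma aubinAround_mono {X Y : Type*} [MetricSpace X] [MetricSpace Y] {F : X → Set Y}
    {x₀ : X} {y₀ : Y} {L L' : ℝ} (h : AubinAround F x₀ y₀ L) (hLL' : L ≤ L') :
    AubinAround F x₀ y₀ L' := by
  obtain ⟨U, hU, V, hV, h⟩ := h
  exact ⟨U, hU, V, hV, fun x hx u hu => (h x hx u hu).trans
    (ENNReal.ofReal_le_ofReal (mul_le_mul_of_nonneg_right hLL' dist_nonneg))⟩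

lemma metRegPartial1_mono {Y₁ Y₂ Z : Type*} [MetricSpace Y₁] [MetricSpace Y₂] [MetricSpace Z]
    {G : Y₁ → Y₂ → Set Z} {y₁₀ : Y₁} {y₂₀ : Y₂} {z₀ : Z} {L L' : ℝ}
    (h : MetRegPartial1 G y₁₀ y₂₀ z₀ L) (hLL' : L ≤ L') : MetRegPartial1 G y₁₀ y₂₀ z₀ L' := by
  obtain ⟨V₁, hV₁, V₂, hV₂, W, hW, h⟩ := h
  exact ⟨V₁, hV₁, V₂, hV₂, W, hW, fun y₁ h₁ y₂ h₂ z hz => (h y₁ h₁ y₂ h₂ z hz).trans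
    (mul_le_mul_left (ENNReal.ofReal_le_ofReal hLL') _)⟩

lemma aubinPartial2_mono {Y₁ Y₂ Z : Type*} [MetricSpace Y₁] [MetricSpace Y₂] [MetricSpace Z]
    {G : Y₁ → Y₂ → Set Z} {y₁₀ : Y₁} {y₂₀ : Y₂} {z₀ : Z} {L L' : ℝ}
    (h : AubinPartial2 G y₁₀ y₂₀ z₀ L) (hLL' : L ≤ L') : AubinPartial2 G y₁₀ y₂₀ z₀ L' := by
  obtain ⟨V₁, hV₁, V₂, hV₂, W, hW, h⟩ := h
  exact ⟨V₁, hV₁, V₂, hV₂, W, hW, fun y₁ h₁ y₂ h₂ y₂' h₂' => (h y₁ h₁ y₂ h₂ y₂' h₂').trans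
    (ENNReal.ofReal_le_ofReal (mul_le_mul_of_nonneg_right hLL' dist_nonneg))⟩

lemma metRegAround_of_lt {X Y : Type*} [MetricSpace X] [MetricSpace Y] {F : X → Set Y}
    {x₀ : X} {y₀ : Y} {t : ℝ} (ht : 0 < t) (h : regMod F x₀ y₀ < ENNReal.ofReal t) :
    MetRegAround F x₀ y₀ t := by
  obtain ⟨l, ⟨L, hL0, hreg, rfl⟩, hlt⟩ := sInf_lt_iff.mp h
  exact metRegAround_mono hreg ((ENNReal.ofReal_lt_ofReal_iff ht).mp hlt).le

lemma aubinAround_of_lt {X Y : Type*} [MetricSpace X] [MetricSpace Y] {F : X → Set Y}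
    {x₀ : X} {y₀ : Y} {t : ℝ} (ht : 0 < t) (h : lipMod F x₀ y₀ < ENNReal.ofReal t) :
    AubinAround F x₀ y₀ t := by
  obtain ⟨l, ⟨L, hL0, hreg, rfl⟩, hlt⟩ := sInf_lt_iff.mp h
  exact aubinAround_mono hreg ((ENNReal.ofReal_lt_ofReal_iff ht).mp hlt).le

lemma metRegPartial1_of_lt {Y₁ Y₂ Z : Type*} [MetricSpace Y₁] [MetricSpace Y₂] [MetricSpace Z]
    {G : Y₁ → Y₂ → Set Z} {y₁₀ : Y₁} {y₂₀ : Y₂} {z₀ : Z} {t : ℝ} (ht : 0 < t)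
    (h : regHat1Mod G y₁₀ y₂₀ z₀ < ENNReal.ofReal t) : MetRegPartial1 G y₁₀ y₂₀ z₀ t := by
  obtain ⟨l, ⟨L, hL0, hreg, rfl⟩, hlt⟩ := sInf_lt_iff.mp h
  exact metRegPartial1_mono hreg ((ENNReal.ofReal_lt_ofReal_iff ht).mp hlt).le

lemma aubinPartial2_of_lt {Y₁ Y₂ Z : Type*} [MetricSpace Y₁] [MetricSpace Y₂] [MetricSpace Z]
    {G : Y₁ → Y₂ → Set Z} {y₁₀ : Y₁} {y₂₀ : Y₂} {z₀ : Z} {t : ℝ} (ht : 0 < t)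
    (h : lipHat2Mod G y₁₀ y₂₀ z₀ < ENNReal.ofReal t) : AubinPartial2 G y₁₀ y₂₀ z₀ t := by
  obtain ⟨l, ⟨L, hL0, hreg, rfl⟩, hlt⟩ := sInf_lt_iff.mp h
  exact aubinPartial2_mono hreg ((ENNReal.ofReal_lt_ofReal_iff ht).mp hlt).le

lemma dzeroEdist_triangle {X Y₁ Y₂ : Type*} [MetricSpace X] [MetricSpace Y₁] [MetricSpace Y₂]
    (m l : ℝ) (p q s : X × Y₁ × Y₂) :
    dzeroEdist m l p s ≤ dzeroEdist m l p q + dzeroEdist m l q s := by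
  unfold dzeroEdist
  refine max_le ((edist_triangle _ q.1 _).trans
    (add_le_add (le_max_left _ _) (le_max_left _ _))) (max_le ?_ ?_)
  · calc ENNReal.ofReal m * edist p.2.1 s.2.1
        ≤ ENNReal.ofReal m * (edist p.2.1 q.2.1 + edist q.2.1 s.2.1) := by
          gcongr; exact edist_triangle _ _ _
      _ = ENNReal.ofReal m * edist p.2.1 q.2.1 + ENNReal.ofReal m * edist q.2.1 s.2.1 :=
          mul_add _ _ _
      _ ≤ _ := add_le_add ((le_max_left _ _).trans (le_max_right _ _))
          ((le_max_left _ _).trans (le_max_right _ _))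
  · calc (ENNReal.ofReal l)⁻¹ * edist p.2.2 s.2.2
        ≤ (ENNReal.ofReal l)⁻¹ * (edist p.2.2 q.2.2 + edist q.2.2 s.2.2) := by
          gcongr; exact edist_triangle _ _ _
      _ = (ENNReal.ofReal l)⁻¹ * edist p.2.2 q.2.2 + (ENNReal.ofReal l)⁻¹ * edist q.2.2 s.2.2 :=
          mul_add _ _ _
      _ ≤ _ := add_le_add ((le_max_right _ _).trans (le_max_right _ _))
          ((le_max_right _ _).trans (le_max_right _ _))

lemma dzeroInfDist_le_dzeroEdist {X Y₁ Y₂ : Type*} [MetricSpace X] [MetricSpace Y₁]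
    [MetricSpace Y₂] (m l : ℝ) (p : X × Y₁ × Y₂) {q : X × Y₁ × Y₂} {S : Set (X × Y₁ × Y₂)}
    (hq : q ∈ S) : dzeroInfDist m l p S ≤ dzeroEdist m l p q := iInf₂_le q hq

lemma one_add_mul_inv_sub {θ : ℝ≥0∞} (hθ : θ < 1) :
    (1 : ℝ≥0∞) + θ * (1 - θ)⁻¹ = (1 - θ)⁻¹ := by
  have h0 : (1 : ℝ≥0∞) - θ ≠ 0 := (tsub_pos_iff_lt.2 hθ).ne'
  have htop : (1 : ℝ≥0∞) - θ ≠ ⊤ := (tsub_le_self.trans_lt (by norm_num)).ne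
  calc (1 : ℝ≥0∞) + θ * (1 - θ)⁻¹
      = (1 - θ) * (1 - θ)⁻¹ + θ * (1 - θ)⁻¹ := by rw [ENNReal.mul_inv_cancel h0 htop]
    _ = ((1 - θ) + θ) * (1 - θ)⁻¹ := (add_mul _ _ _).symm
    _ = 1 * (1 - θ)⁻¹ := by rw [tsub_add_cancel_of_le hθ.le]
    _ = (1 - θ)⁻¹ := one_mul _

set_option maxHeartbeats 1000000 in
lemma core_iteration {X Y₁ Y₂ Z : Type*} [MetricSpace X] [CompleteSpace X]
    [MetricSpace Y₁] [CompleteSpace Y₁] [MetricSpace Y₂] [CompleteSpace Y₂] [MetricSpace Z]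
    (F₁ : X → Set Y₁) (F₂ : X → Set Y₂) (G : Y₁ → Y₂ → Set Z)
    (hclF₁ : IsClosed (graphOf F₁)) (hclF₂ : IsClosed (graphOf F₂))
    (hclG : IsClosed {p : (Y₁ × Y₂) × Z | p.2 ∈ G p.1.1 p.1.2})
    (xb : X) (yb₁ : Y₁) (yb₂ : Y₂) (z : Z)
    (a b c d R : ℝ) (ha : 0 < a) (hb : 0 < b) (hc : 0 < c) (hd : 0 < d)
    (hθ : ENNReal.ofReal a * ENNReal.ofReal b * ENNReal.ofReal c * ENNReal.ofReal d < 1)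
    (H₁ : ∀ x, edist x xb ≤ ENNReal.ofReal R → ∀ y₁, edist y₁ yb₁ ≤ ENNReal.ofReal R →
      EMetric.infEdist x (preImg F₁ y₁) ≤ ENNReal.ofReal a * EMetric.infEdist y₁ (F₁ x))
    (H₂ : ∀ x, edist x xb ≤ ENNReal.ofReal R → ∀ u, edist u xb ≤ ENNReal.ofReal R →
      ∀ y₂, edist y₂ yb₂ ≤ ENNReal.ofReal R → y₂ ∈ F₂ x →
      EMetric.infEdist y₂ (F₂ u) ≤ ENNReal.ofReal b * edist x u)
    (H₃ : ∀ y₁, edist y₁ yb₁ ≤ ENNReal.ofReal R → ∀ y₂, edist y₂ yb₂ ≤ ENNReal.ofReal R →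
      EMetric.infEdist y₁ {y | z ∈ G y y₂} ≤ ENNReal.ofReal c * EMetric.infEdist z (G y₁ y₂))
    (H₄ : ∀ y₁, edist y₁ yb₁ ≤ ENNReal.ofReal R → ∀ y₂, edist y₂ yb₂ ≤ ENNReal.ofReal R →
      ∀ y₂', edist y₂' yb₂ ≤ ENNReal.ofReal R → z ∈ G y₁ y₂ →
      EMetric.infEdist z (G y₁ y₂') ≤ ENNReal.ofReal d * edist y₂ y₂')
    (x₀ : X) (y₁₀ : Y₁) (y₂₀ : Y₂) (ε₀ : ℝ≥0∞) (hε₀ : 0 < ε₀) (hε₀top : ε₀ ≠ ⊤)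
    (hm₁ : y₁₀ ∈ F₁ x₀) (hm₂ : y₂₀ ∈ F₂ x₀)
    (hdz : EMetric.infEdist z (G y₁₀ y₂₀) < ε₀)
    (hx₀ : edist x₀ xb + ENNReal.ofReal a * ENNReal.ofReal c * ε₀ *
      (1 - ENNReal.ofReal a * ENNReal.ofReal b * ENNReal.ofReal c * ENNReal.ofReal d)⁻¹
        ≤ ENNReal.ofReal R)
    (hy₁₀ : edist y₁₀ yb₁ + ENNReal.ofReal c * ε₀ *
      (1 - ENNReal.ofReal a * ENNReal.ofReal b * ENNReal.ofReal c * ENNReal.ofReal d)⁻¹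
        ≤ ENNReal.ofReal R)
    (hy₂₀ : edist y₂₀ yb₂ + ENNReal.ofReal a * ENNReal.ofReal b * ENNReal.ofReal c * ε₀ *
      (1 - ENNReal.ofReal a * ENNReal.ofReal b * ENNReal.ofReal c * ENNReal.ofReal d)⁻¹
        ≤ ENNReal.ofReal R) :
    ∃ q, q ∈ preImg (auxMap F₁ F₂ G) z ∧
      dzeroEdist a b (x₀, y₁₀, y₂₀) q ≤ ENNReal.ofReal a * ENNReal.ofReal c * ε₀ *
        (1 - ENNReal.ofReal a * ENNReal.ofReal b * ENNReal.ofReal c * ENNReal.ofReal d)⁻¹ := by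
  set A := ENNReal.ofReal a with hA
  set B := ENNReal.ofReal b with hB
  set C := ENNReal.ofReal c with hC
  set D := ENNReal.ofReal d with hD
  set θ := A * B * C * D with hθdef
  have hA0 : A ≠ 0 := (ENNReal.ofReal_pos.2 ha).ne'
  have hB0 : B ≠ 0 := (ENNReal.ofReal_pos.2 hb).ne'
  have hC0 : C ≠ 0 := (ENNReal.ofReal_pos.2 hc).ne'
  have hD0 : D ≠ 0 := (ENNReal.ofReal_pos.2 hd).ne'
  have hAt : A ≠ ⊤ := ENNReal.ofReal_ne_top
  have hBt : B ≠ ⊤ := ENNReal.ofReal_ne_top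
  have hCt : C ≠ ⊤ := ENNReal.ofReal_ne_top
  have hDt : D ≠ ⊤ := ENNReal.ofReal_ne_top
  have hθ0 : θ ≠ 0 := by
    simp only [hθdef]
    exact (ENNReal.mul_pos (ENNReal.mul_pos (ENNReal.mul_pos hA0 hB0).ne' hC0).ne' hD0).ne'
  have hθt : θ ≠ ⊤ := hθ.ne_top
  have hIk : (1 : ℝ≥0∞) ≤ (1 - θ)⁻¹ := ENNReal.one_le_inv.2 tsub_le_self
  have hIt : (1 - θ)⁻¹ ≠ ⊤ := ENNReal.inv_ne_top.2 (tsub_pos_iff_lt.2 hθ).ne'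
  have hkeysum : ∀ t : ℝ≥0∞, t + t * (θ * (1 - θ)⁻¹) = t * (1 - θ)⁻¹ := by
    intro t
    calc t + t * (θ * (1 - θ)⁻¹) = t * (1 + θ * (1 - θ)⁻¹) := by ring
      _ = t * (1 - θ)⁻¹ := by rw [one_add_mul_inv_sub hθ]
  -- the invariant
  set Inv : (X × Y₁ × Y₂) → ℝ≥0∞ → Prop := fun p ε =>
    p.2.1 ∈ F₁ p.1 ∧ p.2.2 ∈ F₂ p.1 ∧ EMetric.infEdist z (G p.2.1 p.2.2) < ε ∧
    edist p.1 xb + A * C * ε * (1 - θ)⁻¹ ≤ ENNReal.ofReal R ∧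
    edist p.2.1 yb₁ + C * ε * (1 - θ)⁻¹ ≤ ENNReal.ofReal R ∧
    edist p.2.2 yb₂ + A * B * C * ε * (1 - θ)⁻¹ ≤ ENNReal.ofReal R with hInvDef
  have step : ∀ p ε, 0 < ε → ε ≠ ⊤ → Inv p ε → ∃ p' : X × Y₁ × Y₂, Inv p' (θ * ε) ∧
      edist p.1 p'.1 ≤ A * C * ε ∧ edist p.2.1 p'.2.1 ≤ C * ε ∧
      edist p.2.2 p'.2.2 ≤ A * B * C * ε ∧ z ∈ G p'.2.1 p.2.2 := by
    rintro ⟨x, y₁, y₂⟩ ε hεpos hεtop ⟨hm1, hm2, hlt, hxI, hy1I, hy2I⟩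
    have hCε : C * ε ≠ ⊤ := ENNReal.mul_ne_top hCt hεtop
    have hACε : A * (C * ε) ≠ ⊤ := ENNReal.mul_ne_top hAt hCε
    have hxR : edist x xb ≤ ENNReal.ofReal R := le_self_add.trans hxI
    have hy1R : edist y₁ yb₁ ≤ ENNReal.ofReal R := le_self_add.trans hy1I
    have hy2R : edist y₂ yb₂ ≤ ENNReal.ofReal R := le_self_add.trans hy2I
    -- step 1 : new y₁'
    have k1 : EMetric.infEdist y₁ {y | z ∈ G y y₂} < C * ε :=
      (H₃ y₁ hy1R y₂ hy2R).trans_lt ((ENNReal.mul_lt_mul_iff_right hC0 hCt).2 hlt)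
    obtain ⟨y₁', hy₁'G, hy₁'d⟩ := EMetric.infEdist_lt_iff.mp k1
    have hy₁'R : edist y₁' yb₁ ≤ ENNReal.ofReal R := by
      calc edist y₁' yb₁ ≤ edist y₁' y₁ + edist y₁ yb₁ := edist_triangle _ _ _
        _ ≤ C * ε * (1 - θ)⁻¹ + edist y₁ yb₁ := by
            refine add_le_add (le_trans (edist_comm y₁' y₁ ▸ hy₁'d.le) ?_) le_rfl
            exact le_mul_of_one_le_right zero_le hIk
        _ ≤ ENNReal.ofReal R := by rw [add_comm]; exact hy1I
    -- step 2 : new x'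
    have k2 : EMetric.infEdist x (preImg F₁ y₁') < A * (C * ε) := by
      refine (H₁ x hxR y₁' hy₁'R).trans_lt ?_
      refine (ENNReal.mul_lt_mul_iff_right hA0 hAt).2 ?_
      exact ((EMetric.infEdist_le_edist_of_mem hm1).trans_lt (edist_comm y₁' y₁ ▸ hy₁'d))
    obtain ⟨x', hx'F, hx'd⟩ := EMetric.infEdist_lt_iff.mp k2
    have hx'R : edist x' xb ≤ ENNReal.ofReal R := by
      calc edist x' xb ≤ edist x' x + edist x xb := edist_triangle _ _ _
        _ ≤ A * C * ε * (1 - θ)⁻¹ + edist x xb := by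
            refine add_le_add (le_trans (edist_comm x' x ▸ hx'd.le) ?_) le_rfl
            calc A * (C * ε) = A * C * ε := by ring
              _ ≤ A * C * ε * (1 - θ)⁻¹ := le_mul_of_one_le_right zero_le hIk
        _ ≤ ENNReal.ofReal R := by rw [add_comm]; exact hxI
    -- step 3 : new y₂'
    have k3 : EMetric.infEdist y₂ (F₂ x') < A * B * C * ε := by
      refine (H₂ x hxR x' hx'R y₂ hy2R hm2).trans_lt ?_
      calc B * edist x x' < B * (A * (C * ε)) := (ENNReal.mul_lt_mul_iff_right hB0 hBt).2 hx'd
        _ = A * B * C * ε := by ring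
    obtain ⟨y₂', hy₂'F, hy₂'d⟩ := EMetric.infEdist_lt_iff.mp k3
    have hy₂'R : edist y₂' yb₂ ≤ ENNReal.ofReal R := by
      calc edist y₂' yb₂ ≤ edist y₂' y₂ + edist y₂ yb₂ := edist_triangle _ _ _
        _ ≤ A * B * C * ε * (1 - θ)⁻¹ + edist y₂ yb₂ := by
            refine add_le_add (le_trans (edist_comm y₂' y₂ ▸ hy₂'d.le) ?_) le_rfl
            exact le_mul_of_one_le_right zero_le hIk
        _ ≤ ENNReal.ofReal R := by rw [add_comm]; exact hy2I
    -- step 4 : the new distance estimate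
    have hABCε : A * B * C * ε ≠ ⊤ :=
      ENNReal.mul_ne_top (ENNReal.mul_ne_top (ENNReal.mul_ne_top hAt hBt) hCt) hεtop
    have k4 : EMetric.infEdist z (G y₁' y₂') < θ * ε := by
      refine (H₄ y₁' hy₁'R y₂ hy2R y₂' hy₂'R hy₁'G).trans_lt ?_
      calc D * edist y₂ y₂' < D * (A * B * C * ε) := (ENNReal.mul_lt_mul_iff_right hD0 hDt).2 hy₂'d
        _ = θ * ε := by rw [hθdef]; ring
    have hxx' : edist x x' ≤ A * C * ε := by
      refine hx'd.le.trans (le_of_eq ?_); ring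
    refine ⟨(x', y₁', y₂'), ⟨hx'F, hy₂'F, k4, ?_, ?_, ?_⟩,
      hxx', hy₁'d.le, hy₂'d.le, hy₁'G⟩
    · calc edist x' xb + A * C * (θ * ε) * (1 - θ)⁻¹
          ≤ (edist x' x + edist x xb) + A * C * (θ * ε) * (1 - θ)⁻¹ := by
            gcongr; exact edist_triangle _ _ _
        _ ≤ (A * C * ε + edist x xb) + A * C * (θ * ε) * (1 - θ)⁻¹ := by
            gcongr
            exact edist_comm x' x ▸ hxx'
        _ = edist x xb + (A * C * ε + (A * C * ε) * (θ * (1 - θ)⁻¹)) := by ring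
        _ = edist x xb + A * C * ε * (1 - θ)⁻¹ := by rw [hkeysum]
        _ ≤ ENNReal.ofReal R := hxI
    · calc edist y₁' yb₁ + C * (θ * ε) * (1 - θ)⁻¹
          ≤ (edist y₁' y₁ + edist y₁ yb₁) + C * (θ * ε) * (1 - θ)⁻¹ := by
            gcongr; exact edist_triangle _ _ _
        _ ≤ (C * ε + edist y₁ yb₁) + C * (θ * ε) * (1 - θ)⁻¹ := by
            gcongr; exact edist_comm y₁' y₁ ▸ hy₁'d.le
        _ = edist y₁ yb₁ + (C * ε + (C * ε) * (θ * (1 - θ)⁻¹)) := by ring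
        _ = edist y₁ yb₁ + C * ε * (1 - θ)⁻¹ := by rw [hkeysum]
        _ ≤ ENNReal.ofReal R := hy1I
    · calc edist y₂' yb₂ + A * B * C * (θ * ε) * (1 - θ)⁻¹
          ≤ (edist y₂' y₂ + edist y₂ yb₂) + A * B * C * (θ * ε) * (1 - θ)⁻¹ := by
            gcongr; exact edist_triangle _ _ _
        _ ≤ (A * B * C * ε + edist y₂ yb₂) + A * B * C * (θ * ε) * (1 - θ)⁻¹ := by
            gcongr; exact edist_comm y₂' y₂ ▸ hy₂'d.le
        _ = edist y₂ yb₂ + (A * B * C * ε + (A * B * C * ε) * (θ * (1 - θ)⁻¹)) := by ring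
        _ = edist y₂ yb₂ + A * B * C * ε * (1 - θ)⁻¹ := by rw [hkeysum]
        _ ≤ ENNReal.ofReal R := hy2I
  choose! next hnext using step
  set seq : ℕ → X × Y₁ × Y₂ :=
    fun n => Nat.rec (x₀, y₁₀, y₂₀) (fun n p => next p (θ ^ n * ε₀)) n with hseq
  have hεn : ∀ n : ℕ, 0 < θ ^ n * ε₀ ∧ θ ^ n * ε₀ ≠ ⊤ := fun n =>
    ⟨ENNReal.mul_pos (pow_ne_zero n hθ0) hε₀.ne', ENNReal.mul_ne_top (ENNReal.pow_ne_top hθt) hε₀top⟩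
  have hInv : ∀ n, Inv (seq n) (θ ^ n * ε₀) := by
    intro n
    induction n with
    | zero =>
      simp only [pow_zero, one_mul]
      exact ⟨hm₁, hm₂, hdz, hx₀, hy₁₀, hy₂₀⟩
    | succ n ih =>
      have h := hnext (seq n) (θ ^ n * ε₀) (hεn n).1 (hεn n).2 ih
      have : θ * (θ ^ n * ε₀) = θ ^ (n + 1) * ε₀ := by rw [pow_succ]; ring
      exact this ▸ h.1
  have hstepbd : ∀ n, edist (seq n).1 (seq (n+1)).1 ≤ A * C * ε₀ * θ ^ n ∧
      edist (seq n).2.1 (seq (n+1)).2.1 ≤ C * ε₀ * θ ^ n ∧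
      edist (seq n).2.2 (seq (n+1)).2.2 ≤ A * B * C * ε₀ * θ ^ n ∧
      z ∈ G (seq (n+1)).2.1 (seq n).2.2 := by
    intro n
    have h := hnext (seq n) (θ ^ n * ε₀) (hεn n).1 (hεn n).2 (hInv n)
    refine ⟨h.2.1.trans (le_of_eq (by ring)), h.2.2.1.trans (le_of_eq (by ring)),
      h.2.2.2.1.trans (le_of_eq (by ring)), h.2.2.2.2⟩
  have hACt : A * C * ε₀ ≠ ⊤ := ENNReal.mul_ne_top (ENNReal.mul_ne_top hAt hCt) hε₀top
  have hCet : C * ε₀ ≠ ⊤ := ENNReal.mul_ne_top hCt hε₀top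
  have hABCt : A * B * C * ε₀ ≠ ⊤ :=
    ENNReal.mul_ne_top (ENNReal.mul_ne_top (ENNReal.mul_ne_top hAt hBt) hCt) hε₀top
  obtain ⟨u, hu⟩ := cauchySeq_tendsto_of_complete
    (cauchySeq_of_edist_le_geometric θ (A * C * ε₀) hθ hACt (fun n => (hstepbd n).1))
  obtain ⟨v₁, hv₁⟩ := cauchySeq_tendsto_of_complete
    (cauchySeq_of_edist_le_geometric θ (C * ε₀) hθ hCet (fun n => (hstepbd n).2.1))
  obtain ⟨v₂, hv₂⟩ := cauchySeq_tendsto_of_complete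
    (cauchySeq_of_edist_le_geometric θ (A * B * C * ε₀) hθ hABCt (fun n => (hstepbd n).2.2.1))
  have hF₁lim : v₁ ∈ F₁ u := by
    have ht : Tendsto (fun n => ((seq n).1, (seq n).2.1)) atTop (𝓝 (u, v₁)) :=
      hu.prodMk_nhds hv₁
    exact hclF₁.mem_of_tendsto ht (Filter.Eventually.of_forall fun n => (hInv n).1)
  have hF₂lim : v₂ ∈ F₂ u := by
    have ht : Tendsto (fun n => ((seq n).1, (seq n).2.2)) atTop (𝓝 (u, v₂)) :=
      hu.prodMk_nhds hv₂
    exact hclF₂.mem_of_tendsto ht (Filter.Eventually.of_forall fun n => (hInv n).2.1)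
  have hGlim : z ∈ G v₁ v₂ := by
    have ht : Tendsto (fun n => ((((seq (n+1)).2.1 : Y₁), ((seq n).2.2 : Y₂)), z)) atTop
        (𝓝 ((v₁, v₂), z)) :=
      ((hv₁.comp (tendsto_add_atTop_nat 1)).prodMk_nhds hv₂).prodMk_nhds tendsto_const_nhds
    exact hclG.mem_of_tendsto ht (Filter.Eventually.of_forall fun n => (hstepbd n).2.2.2)
  refine ⟨(u, v₁, v₂), ⟨⟨hF₁lim, hF₂lim⟩, hGlim⟩, ?_⟩
  have hdu : edist x₀ u ≤ A * C * ε₀ * (1 - θ)⁻¹ := by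
    have := edist_le_of_edist_le_geometric_of_tendsto₀ θ (A * C * ε₀)
      (fun n => (hstepbd n).1) hu
    rwa [ENNReal.div_eq_inv_mul, mul_comm] at this
  have hdv₁ : edist y₁₀ v₁ ≤ C * ε₀ * (1 - θ)⁻¹ := by
    have := edist_le_of_edist_le_geometric_of_tendsto₀ θ (C * ε₀)
      (fun n => (hstepbd n).2.1) hv₁
    rwa [ENNReal.div_eq_inv_mul, mul_comm] at this
  have hdv₂ : edist y₂₀ v₂ ≤ A * B * C * ε₀ * (1 - θ)⁻¹ := by
    have := edist_le_of_edist_le_geometric_of_tendsto₀ θ (A * B * C * ε₀)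
      (fun n => (hstepbd n).2.2.1) hv₂
    rwa [ENNReal.div_eq_inv_mul, mul_comm] at this
  refine max_le hdu (max_le ?_ ?_)
  · calc A * edist y₁₀ v₁ ≤ A * (C * ε₀ * (1 - θ)⁻¹) := by gcongr
      _ = A * C * ε₀ * (1 - θ)⁻¹ := by ring
  · calc B⁻¹ * edist y₂₀ v₂ ≤ B⁻¹ * (A * B * C * ε₀ * (1 - θ)⁻¹) := by gcongr
      _ = (B⁻¹ * B) * (A * C * ε₀ * (1 - θ)⁻¹) := by ring
      _ = A * C * ε₀ * (1 - θ)⁻¹ := by rw [ENNReal.inv_mul_cancel hB0 hBt, one_mul]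

lemma le_excess {Y : Type*} [PseudoEMetricSpace Y] {A B : Set Y} {y : Y} (hy : y ∈ A) :
    EMetric.infEdist y B ≤ excess A B := le_iSup₂ (f := fun a _ => EMetric.infEdist a B) y hy

lemma ennreal_factor_ne_top {x y : ℝ≥0∞} (h : x * y ≠ ⊤) (hx : x ≠ 0) : y ≠ ⊤ := fun hy =>
  h (by rw [hy, ENNReal.mul_top hx])


set_option maxHeartbeats 2000000

/-- main result, Theorem 5, regularity of the auxiliary map `R`. -/
theorem main_result_error_bound_for_R
    {X Y₁ Y₂ Z : Type*} [MetricSpace X] [CompleteSpace X] [MetricSpace Y₁] [CompleteSpace Y₁]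
    [MetricSpace Y₂] [CompleteSpace Y₂] [MetricSpace Z]
    (F₁ : X → Set Y₁) (F₂ : X → Set Y₂) (G : Y₁ → Y₂ → Set Z)
    (hclF₁ : IsClosed (graphOf F₁)) (hclF₂ : IsClosed (graphOf F₂))
    (hclG : IsClosed {p : (Y₁ × Y₂) × Z | p.2 ∈ G p.1.1 p.1.2})
    (xb : X) (yb₁ : Y₁) (yb₂ : Y₂) (zb : Z)
    (hy₁ : yb₁ ∈ F₁ xb) (hy₂ : yb₂ ∈ F₂ xb) (hzb : zb ∈ G yb₁ yb₂)
    (hregF₁ : ∃ L > (0 : ℝ), MetRegAround F₁ xb yb₁ L)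
    (haubF₂ : ∃ L > (0 : ℝ), AubinAround F₂ xb yb₂ L)
    (hregG : ∃ L > (0 : ℝ), MetRegPartial1 G yb₁ yb₂ zb L)
    (haubG : ∃ L > (0 : ℝ), AubinPartial2 G yb₁ yb₂ zb L)
    (hprod :
      0 < regMod F₁ xb yb₁ * lipMod F₂ xb yb₂ * regHat1Mod G yb₁ yb₂ zb *
          lipHat2Mod G yb₁ yb₂ zb ∧
      regMod F₁ xb yb₁ * lipMod F₂ xb yb₂ * regHat1Mod G yb₁ yb₂ zb *
          lipHat2Mod G yb₁ yb₂ zb < 1) :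
    ∀ ρ : ℝ≥0∞,
      (regMod F₁ xb yb₁ * regHat1Mod G yb₁ yb₂ zb) /
          (1 - regMod F₁ xb yb₁ * lipMod F₂ xb yb₂ * regHat1Mod G yb₁ yb₂ zb *
            lipHat2Mod G yb₁ yb₂ zb) < ρ →
      ∃ m > (0 : ℝ), ∃ l > (0 : ℝ), ∃ U ∈ 𝓝 xb, ∃ V₁ ∈ 𝓝 yb₁, ∃ V₂ ∈ 𝓝 yb₂, ∃ W ∈ 𝓝 zb,
        (∀ x ∈ U, ∀ y₁ ∈ V₁, ∀ y₂ ∈ V₂, ∀ z ∈ W,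
          dzeroInfDist m l (x, y₁, y₂) (preImg (auxMap F₁ F₂ G) z) ≤
            ρ * lscEnv (auxMap F₁ F₂ G) ((x, y₁, y₂) : X × Y₁ × Y₂) z) ∧
        (∀ x ∈ U, ∀ y₁ ∈ V₁, ∀ y₂ ∈ V₂, ∀ z ∈ W,
          dzeroInfDist m l (x, y₁, y₂) (preImg (auxMap F₁ F₂ G) z) ≤
            ρ * EMetric.infEdist z (auxMap F₁ F₂ G (x, y₁, y₂))) := by

  intro ρ hρ
  classical
  obtain ⟨hP0, hP1⟩ := hprod
  set α := regMod F₁ xb yb₁ with hαdef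
  set β := lipMod F₂ xb yb₂ with hβdef
  set γ := regHat1Mod G yb₁ yb₂ zb with hγdef
  set δ := lipHat2Mod G yb₁ yb₂ zb with hδdef
  -- the moduli are positive and finite
  have hP0' : α * β * γ * δ ≠ 0 := hP0.ne'
  have hδ0 : δ ≠ 0 := fun h => hP0' (by rw [h, mul_zero])
  have hγ0 : γ ≠ 0 := fun h => hP0' (by rw [h, mul_zero, zero_mul])
  have hβ0 : β ≠ 0 := fun h => hP0' (by rw [h, mul_zero, zero_mul, zero_mul])
  have hα0 : α ≠ 0 := fun h => hP0' (by rw [h, zero_mul, zero_mul, zero_mul])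
  have hPt : α * β * γ * δ ≠ ⊤ := hP1.ne_top
  have hαt : α ≠ ⊤ := by
    refine ennreal_factor_ne_top (x := β * γ * δ) ?_ (by simp [mul_ne_zero, hβ0, hγ0, hδ0])
    rw [show β * γ * δ * α = α * β * γ * δ by ring]; exact hPt
  have hβt : β ≠ ⊤ := by
    refine ennreal_factor_ne_top (x := α * γ * δ) ?_ (by simp [mul_ne_zero, hα0, hγ0, hδ0])
    rw [show α * γ * δ * β = α * β * γ * δ by ring]; exact hPt
  have hγt : γ ≠ ⊤ := by
    refine ennreal_factor_ne_top (x := α * β * δ) ?_ (by simp [mul_ne_zero, hα0, hβ0, hδ0])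
    rw [show α * β * δ * γ = α * β * γ * δ by ring]; exact hPt
  have hδt : δ ≠ ⊤ := by
    refine ennreal_factor_ne_top (x := α * β * γ) ?_ (by simp [mul_ne_zero, hα0, hβ0, hγ0])
    rw [show α * β * γ * δ = α * β * γ * δ by ring]; exact hPt
  have h1P0 : (1 : ℝ≥0∞) - α * β * γ * δ ≠ 0 := (tsub_pos_iff_lt.2 hP1).ne'
  have hρ₀t : α * γ / (1 - α * β * γ * δ) ≠ ⊤ := by
    rw [div_eq_mul_inv]
    exact ENNReal.mul_ne_top (ENNReal.mul_ne_top hαt hγt) (ENNReal.inv_ne_top.2 h1P0)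
  have hρ₀0 : α * γ / (1 - α * β * γ * δ) ≠ 0 :=
    (ENNReal.div_pos (mul_ne_zero hα0 hγ0) (tsub_le_self.trans_lt (by norm_num)).ne).ne'
  -- replace ρ by a finite value ρ̂
  set ρ' := min ρ (α * γ / (1 - α * β * γ * δ) + 1) with hρ'def
  have hρ'ρ : ρ' ≤ ρ := min_le_left _ _
  have hρ' : α * γ / (1 - α * β * γ * δ) < ρ' :=
    lt_min hρ (ENNReal.lt_add_right hρ₀t one_ne_zero)
  have hρ't : ρ' ≠ ⊤ :=
    ((min_le_right _ _).trans_lt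
      (ENNReal.add_lt_top.2 ⟨hρ₀t.lt_top, ENNReal.one_lt_top⟩)).ne
  have hρ'0 : ρ' ≠ 0 := ((zero_lt_iff.2 hρ₀0).trans hρ').ne'
  -- select real constants a b c d slightly above the moduli
  set a' := α.toReal with ha'def
  set b' := β.toReal with hb'def
  set c' := γ.toReal with hc'def
  set d' := δ.toReal with hd'def
  have ha'0 : 0 < a' := ENNReal.toReal_pos hα0 hαt
  have hb'0 : 0 < b' := ENNReal.toReal_pos hβ0 hβt
  have hc'0 : 0 < c' := ENNReal.toReal_pos hγ0 hγt
  have hd'0 : 0 < d' := ENNReal.toReal_pos hδ0 hδt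
  have hP'eq : (α * β * γ * δ).toReal = a' * b' * c' * d' := by
    simp [ENNReal.toReal_mul, ha'def, hb'def, hc'def, hd'def]
  have hP'lt1 : a' * b' * c' * d' < 1 := by
    rw [← hP'eq]
    simpa using ENNReal.toReal_strict_mono (by norm_num) hP1
  have hρ₀R : a' * c' / (1 - a' * b' * c' * d') < ρ'.toReal := by
    have h := ENNReal.toReal_strict_mono hρ't hρ'
    rwa [ENNReal.toReal_div, ENNReal.toReal_sub_of_le hP1.le (by norm_num),
      hP'eq, ENNReal.toReal_mul, ENNReal.toReal_one] at h
  have hcont1 : ContinuousAt (fun t : ℝ => (a' + t) * (b' + t) * (c' + t) * (d' + t)) 0 := by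
    fun_prop
  have hev1 : ∀ᶠ t : ℝ in 𝓝 0, (a' + t) * (b' + t) * (c' + t) * (d' + t) < 1 :=
    hcont1.eventually_lt continuousAt_const (by simpa using hP'lt1)
  have hcont2 : ContinuousAt
      (fun t : ℝ => (a' + t) * (c' + t) / (1 - (a' + t) * (b' + t) * (c' + t) * (d' + t))) 0 := by
    apply ContinuousAt.div (by fun_prop) (by fun_prop)
    simpa using (sub_pos.2 hP'lt1).ne'
  have hev2 : ∀ᶠ t : ℝ in 𝓝 0,
      (a' + t) * (c' + t) / (1 - (a' + t) * (b' + t) * (c' + t) * (d' + t)) < ρ'.toReal :=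
    hcont2.eventually_lt continuousAt_const (by simpa using hρ₀R)
  obtain ⟨ε, hεcond, hε0⟩ : ∃ ε : ℝ, ((a' + ε) * (b' + ε) * (c' + ε) * (d' + ε) < 1 ∧
      (a' + ε) * (c' + ε) / (1 - (a' + ε) * (b' + ε) * (c' + ε) * (d' + ε)) < ρ'.toReal) ∧
      0 < ε := by
    have h := ((hev1.and hev2).filter_mono nhdsWithin_le_nhds).and
      (eventually_mem_nhdsWithin (s := Set.Ioi (0:ℝ)))
    exact h.exists
  set a := a' + ε with hadef
  set b := b' + ε with hbdef
  set c := c' + ε with hcdef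
  set d := d' + ε with hddef
  have ha : 0 < a := by positivity
  have hb : 0 < b := by positivity
  have hc : 0 < c := by positivity
  have hd : 0 < d := by positivity
  have habcd1 : a * b * c * d < 1 := hεcond.1
  have hKρ' : a * c / (1 - a * b * c * d) < ρ'.toReal := hεcond.2
  -- four achievable properties with these constants
  have hMR1 : MetRegAround F₁ xb yb₁ a := by
    refine metRegAround_of_lt ha ?_
    calc α = ENNReal.ofReal a' := (ENNReal.ofReal_toReal hαt).symm
      _ < ENNReal.ofReal a := (ENNReal.ofReal_lt_ofReal_iff ha).2 (by simp [hadef, hε0])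
  have hAub2 : AubinAround F₂ xb yb₂ b := by
    refine aubinAround_of_lt hb ?_
    calc β = ENNReal.ofReal b' := (ENNReal.ofReal_toReal hβt).symm
      _ < ENNReal.ofReal b := (ENNReal.ofReal_lt_ofReal_iff hb).2 (by simp [hbdef, hε0])
  have hMR3 : MetRegPartial1 G yb₁ yb₂ zb c := by
    refine metRegPartial1_of_lt hc ?_
    calc γ = ENNReal.ofReal c' := (ENNReal.ofReal_toReal hγt).symm
      _ < ENNReal.ofReal c := (ENNReal.ofReal_lt_ofReal_iff hc).2 (by simp [hcdef, hε0])
  have hAub4 : AubinPartial2 G yb₁ yb₂ zb d := by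
    refine aubinPartial2_of_lt hd ?_
    calc δ = ENNReal.ofReal d' := (ENNReal.ofReal_toReal hδt).symm
      _ < ENNReal.ofReal d := (ENNReal.ofReal_lt_ofReal_iff hd).2 (by simp [hddef, hε0])
  obtain ⟨Ua, hUa, Va, hVa, Hr1⟩ := hMR1
  obtain ⟨Ub, hUb, Vb, hVb, Ha2⟩ := hAub2
  obtain ⟨V1c, hV1c, V2c, hV2c, Wc, hWc, Hr3⟩ := hMR3
  obtain ⟨V1d, hV1d, V2d, hV2d, Wd, hWd, Ha4⟩ := hAub4
  obtain ⟨rX, hrX, hXsub⟩ := Metric.mem_nhds_iff.mp (inter_mem hUa hUb)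
  obtain ⟨rY1, hrY1, hY1sub⟩ := Metric.mem_nhds_iff.mp (inter_mem (inter_mem hVa hV1c) hV1d)
  obtain ⟨rY2, hrY2, hY2sub⟩ := Metric.mem_nhds_iff.mp (inter_mem (inter_mem hVb hV2c) hV2d)
  obtain ⟨rz, hrz, hzsub⟩ := Metric.mem_nhds_iff.mp (inter_mem hWc hWd)
  set Rr := min rX (min rY1 rY2) / 2 with hRrdef
  have hRr0 : 0 < Rr := by positivity
  have hminX : min rX (min rY1 rY2) ≤ rX := min_le_left _ _
  have hminY1 : min rX (min rY1 rY2) ≤ rY1 := (min_le_right _ _).trans (min_le_left _ _)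
  have hminY2 : min rX (min rY1 rY2) ≤ rY2 := (min_le_right _ _).trans (min_le_right _ _)
  have hRrX : Rr < rX := by rw [hRrdef]; linarith
  have hRrY1 : Rr < rY1 := by rw [hRrdef]; linarith
  have hRrY2 : Rr < rY2 := by rw [hRrdef]; linarith
  -- membership helpers
  have hXmem : ∀ x : X, edist x xb ≤ ENNReal.ofReal Rr → x ∈ Ua ∩ Ub := by
    intro x hx
    refine hXsub (Metric.mem_ball.2 ?_)
    rw [edist_dist] at hx
    exact ((ENNReal.ofReal_le_ofReal_iff hRr0.le).1 hx).trans_lt hRrX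
  have hY1mem : ∀ y : Y₁, edist y yb₁ ≤ ENNReal.ofReal Rr → y ∈ (Va ∩ V1c) ∩ V1d := by
    intro y hy
    refine hY1sub (Metric.mem_ball.2 ?_)
    rw [edist_dist] at hy
    exact ((ENNReal.ofReal_le_ofReal_iff hRr0.le).1 hy).trans_lt hRrY1
  have hY2mem : ∀ y : Y₂, edist y yb₂ ≤ ENNReal.ofReal Rr → y ∈ (Vb ∩ V2c) ∩ V2d := by
    intro y hy
    refine hY2sub (Metric.mem_ball.2 ?_)
    rw [edist_dist] at hy
    exact ((ENNReal.ofReal_le_ofReal_iff hRr0.le).1 hy).trans_lt hRrY2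
  -- ENNReal constants
  set A := ENNReal.ofReal a with hAdef
  set B := ENNReal.ofReal b with hBdef
  set C := ENNReal.ofReal c with hCdef
  set D := ENNReal.ofReal d with hDdef
  set θ := A * B * C * D with hθdef
  have hA0 : A ≠ 0 := (ENNReal.ofReal_pos.2 ha).ne'
  have hB0 : B ≠ 0 := (ENNReal.ofReal_pos.2 hb).ne'
  have hC0 : C ≠ 0 := (ENNReal.ofReal_pos.2 hc).ne'
  have hAt : A ≠ ⊤ := ENNReal.ofReal_ne_top
  have hBt : B ≠ ⊤ := ENNReal.ofReal_ne_top
  have hCt : C ≠ ⊤ := ENNReal.ofReal_ne_top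
  have hDt : D ≠ ⊤ := ENNReal.ofReal_ne_top
  have hθeq : θ = ENNReal.ofReal (a * b * c * d) := by
    rw [hθdef, hAdef, hBdef, hCdef, hDdef, ENNReal.ofReal_mul (by positivity),
      ENNReal.ofReal_mul (by positivity), ENNReal.ofReal_mul ha.le]
  have hθlt1 : θ < 1 := by
    rw [hθeq]
    exact ENNReal.ofReal_lt_one.2 habcd1
  have h1θ0 : (1 : ℝ≥0∞) - θ ≠ 0 := (tsub_pos_iff_lt.2 hθlt1).ne'
  have h1θt : (1 : ℝ≥0∞) - θ ≠ ⊤ := (tsub_le_self.trans_lt (by norm_num)).ne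
  set K := A * C * (1 - θ)⁻¹ with hKdef
  have hKeq : K = ENNReal.ofReal (a * c / (1 - a * b * c * d)) := by
    rw [hKdef, div_eq_mul_inv, ENNReal.ofReal_mul (by positivity),
      ENNReal.ofReal_inv_of_pos (by linarith), ENNReal.ofReal_mul ha.le,
      show ENNReal.ofReal (1 - a * b * c * d) = 1 - θ by
        rw [hθeq, ENNReal.ofReal_sub _ (by positivity), ENNReal.ofReal_one]]
  have hK0 : K ≠ 0 :=
    mul_ne_zero (mul_ne_zero hA0 hC0) (ENNReal.inv_ne_zero.2 h1θt)
  have hKt : K ≠ ⊤ := by rw [hKeq]; exact ENNReal.ofReal_ne_top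
  have hKρ'e : K < ρ' := by
    rw [hKeq]
    exact (ENNReal.ofReal_lt_iff_lt_toReal (div_nonneg (by positivity) (by linarith)) hρ't).2 hKρ'
  -- hypotheses for the core iteration (z varies in Wc ∩ Wd)
  have H₁ : ∀ x, edist x xb ≤ ENNReal.ofReal Rr → ∀ y₁, edist y₁ yb₁ ≤ ENNReal.ofReal Rr →
      EMetric.infEdist x (preImg F₁ y₁) ≤ A * EMetric.infEdist y₁ (F₁ x) := fun x hx y₁ hy₁ =>
    Hr1 x (hXmem x hx).1 y₁ ((hY1mem y₁ hy₁).1.1)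
  have H₂ : ∀ x, edist x xb ≤ ENNReal.ofReal Rr → ∀ u, edist u xb ≤ ENNReal.ofReal Rr →
      ∀ y₂, edist y₂ yb₂ ≤ ENNReal.ofReal Rr → y₂ ∈ F₂ x →
      EMetric.infEdist y₂ (F₂ u) ≤ B * edist x u := by
    intro x hx u hu y₂ hy₂ hmem
    calc EMetric.infEdist y₂ (F₂ u) ≤ excess (F₂ x ∩ Vb) (F₂ u) :=
          le_excess ⟨hmem, (hY2mem y₂ hy₂).1.1⟩
      _ ≤ ENNReal.ofReal (b * dist x u) := Ha2 x (hXmem x hx).2 u (hXmem u hu).2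
      _ = B * edist x u := by rw [ENNReal.ofReal_mul hb.le, ← edist_dist]
  have H₃ : ∀ z ∈ Wc, ∀ y₁, edist y₁ yb₁ ≤ ENNReal.ofReal Rr →
      ∀ y₂, edist y₂ yb₂ ≤ ENNReal.ofReal Rr →
      EMetric.infEdist y₁ {y | z ∈ G y y₂} ≤ C * EMetric.infEdist z (G y₁ y₂) :=
    fun z hz y₁ hy₁ y₂ hy₂ => Hr3 y₁ (hY1mem y₁ hy₁).1.2 y₂ (hY2mem y₂ hy₂).1.2 z hz
  have H₄ : ∀ z ∈ Wd, ∀ y₁, edist y₁ yb₁ ≤ ENNReal.ofReal Rr →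
      ∀ y₂, edist y₂ yb₂ ≤ ENNReal.ofReal Rr → ∀ y₂', edist y₂' yb₂ ≤ ENNReal.ofReal Rr →
      z ∈ G y₁ y₂ → EMetric.infEdist z (G y₁ y₂') ≤ D * edist y₂ y₂' := by
    intro z hz y₁ hy₁ y₂ hy₂ y₂' hy₂' hmem
    calc EMetric.infEdist z (G y₁ y₂') ≤ excess (G y₁ y₂ ∩ Wd) (G y₁ y₂') :=
          le_excess ⟨hmem, hz⟩
      _ ≤ ENNReal.ofReal (d * dist y₂ y₂') :=
          Ha4 y₁ (hY1mem y₁ hy₁).2 y₂ (hY2mem y₂ hy₂).2 y₂' (hY2mem y₂' hy₂').2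
      _ = D * edist y₂ y₂' := by rw [ENNReal.ofReal_mul hd.le, ← edist_dist]
  -- the budget cap
  set N := A * C + C + A * B * C + 1 with hNdef
  have hN0 : N ≠ 0 := fun h => by simp [hNdef] at h
  have hNt : N ≠ ⊤ := by
    rw [hNdef]
    refine ENNReal.add_ne_top.2 ⟨ENNReal.add_ne_top.2 ⟨ENNReal.add_ne_top.2
      ⟨ENNReal.mul_ne_top hAt hCt, hCt⟩,
      ENNReal.mul_ne_top (ENNReal.mul_ne_top hAt hBt) hCt⟩, ENNReal.one_ne_top⟩
  set εcap := ENNReal.ofReal (Rr / 2) * (1 - θ) * N⁻¹ with hεcapdef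
  have hεcap0 : εcap ≠ 0 :=
    mul_ne_zero (mul_ne_zero (ENNReal.ofReal_pos.2 (by positivity)).ne' h1θ0)
      (ENNReal.inv_ne_zero.2 hNt)
  have hεcapt : εcap ≠ ⊤ :=
    ENNReal.mul_ne_top (ENNReal.mul_ne_top ENNReal.ofReal_ne_top h1θt)
      (ENNReal.inv_ne_top.2 hN0)
  have hcap : ∀ E : ℝ≥0∞, E ≤ N → ∀ e : ℝ≥0∞, e ≤ εcap →
      E * e * (1 - θ)⁻¹ ≤ ENNReal.ofReal (Rr / 2) := by
    intro E hE e he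
    calc E * e * (1 - θ)⁻¹ ≤ E * εcap * (1 - θ)⁻¹ := by gcongr
      _ = ENNReal.ofReal (Rr / 2) * (E * N⁻¹) * ((1 - θ) * (1 - θ)⁻¹) := by
          rw [hεcapdef]; ring
      _ = ENNReal.ofReal (Rr / 2) * (E * N⁻¹) := by
          rw [ENNReal.mul_inv_cancel h1θ0 h1θt, mul_one]
      _ ≤ ENNReal.ofReal (Rr / 2) * (N * N⁻¹) := by gcongr
      _ = ENNReal.ofReal (Rr / 2) := by rw [ENNReal.mul_inv_cancel hN0 hNt, mul_one]
  have hACN : A * C ≤ N := le_add_right (le_add_right le_self_add)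
  have hCN : C ≤ N := le_add_right (le_add_right le_add_self)
  have hABCN : A * B * C ≤ N := le_add_right le_add_self
  -- the threshold
  set t₀ := εcap / 2 with ht₀def
  have ht₀0 : t₀ ≠ 0 := by
    rw [ht₀def]
    simp [ENNReal.div_eq_zero_iff, hεcap0]
  have ht₀t : t₀ ≠ ⊤ := by
    rw [ht₀def]
    exact (ENNReal.div_lt_top hεcapt (by norm_num)).ne
  have ht₀sum : t₀ + t₀ = εcap := ENNReal.add_halves _
  -- the constant Mp
  set Mp := max 1 (max A B⁻¹) with hMpdef
  have hMp1 : (1 : ℝ≥0∞) ≤ Mp := le_max_left _ _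
  have hMp0 : Mp ≠ 0 := (zero_lt_one.trans_le hMp1).ne'
  have hMpt : Mp ≠ ⊤ := by
    rw [hMpdef]
    exact (max_lt (by norm_num) (max_lt hAt.lt_top (ENNReal.inv_lt_top.2
      (zero_lt_iff.2 hB0)))).ne
  -- radii for the final neighborhoods
  set b1 := ρ' * t₀ * 2⁻¹ * Mp⁻¹ with hb1def
  have hb10 : b1 ≠ 0 :=
    mul_ne_zero (mul_ne_zero (mul_ne_zero hρ'0 ht₀0) (by norm_num))
      (ENNReal.inv_ne_zero.2 hMpt)
  have hb1t : b1 ≠ ⊤ := by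
    refine ENNReal.mul_ne_top (ENNReal.mul_ne_top (ENNReal.mul_ne_top hρ't ht₀t) ?_)
      (ENNReal.inv_ne_top.2 hMp0)
    simp
  set b2 := ρ' * t₀ * 2⁻¹ * K⁻¹ with hb2def
  have hb20 : b2 ≠ 0 :=
    mul_ne_zero (mul_ne_zero (mul_ne_zero hρ'0 ht₀0) (by norm_num))
      (ENNReal.inv_ne_zero.2 hKt)
  have hb2t : b2 ≠ ⊤ := by
    refine ENNReal.mul_ne_top (ENNReal.mul_ne_top (ENNReal.mul_ne_top hρ't ht₀t) ?_)
      (ENNReal.inv_ne_top.2 hK0)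
    simp
  set r₁ := min (Rr / 4) b1.toReal with hr₁def
  have hr₁0 : 0 < r₁ := lt_min (by positivity) (ENNReal.toReal_pos hb10 hb1t)
  have hr₁b1 : ENNReal.ofReal r₁ ≤ b1 := by
    calc ENNReal.ofReal r₁ ≤ ENNReal.ofReal b1.toReal :=
          ENNReal.ofReal_le_ofReal (min_le_right _ _)
      _ = b1 := ENNReal.ofReal_toReal hb1t
  have hr₁Rr : r₁ ≤ Rr / 4 := min_le_left _ _
  set r₂ := min (min rz εcap.toReal) b2.toReal with hr₂def
  have hr₂0 : 0 < r₂ :=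
    lt_min (lt_min hrz (ENNReal.toReal_pos hεcap0 hεcapt)) (ENNReal.toReal_pos hb20 hb2t)
  have hr₂cap : ENNReal.ofReal r₂ ≤ εcap := by
    calc ENNReal.ofReal r₂ ≤ ENNReal.ofReal εcap.toReal :=
          ENNReal.ofReal_le_ofReal ((min_le_left _ _).trans (min_le_right _ _))
      _ = εcap := ENNReal.ofReal_toReal hεcapt
  have hr₂b2 : ENNReal.ofReal r₂ ≤ b2 := by
    calc ENNReal.ofReal r₂ ≤ ENNReal.ofReal b2.toReal :=
          ENNReal.ofReal_le_ofReal (min_le_right _ _)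
      _ = b2 := ENNReal.ofReal_toReal hb2t
  have hr₂z : r₂ ≤ rz := (min_le_left _ _).trans (min_le_left _ _)
  -- core application wrapper
  have coreApply : ∀ z, z ∈ Wc → z ∈ Wd → ∀ (x' : X) (y₁' : Y₁) (y₂' : Y₂) (e : ℝ≥0∞),
      0 < e → e ≤ εcap →
      edist x' xb ≤ ENNReal.ofReal (Rr / 2) → edist y₁' yb₁ ≤ ENNReal.ofReal (Rr / 2) →
      edist y₂' yb₂ ≤ ENNReal.ofReal (Rr / 2) →
      y₁' ∈ F₁ x' → y₂' ∈ F₂ x' → EMetric.infEdist z (G y₁' y₂') < e →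
      ∃ q ∈ preImg (auxMap F₁ F₂ G) z, dzeroEdist a b (x', y₁', y₂') q ≤ K * e := by
    intro z hzWc hzWd x' y₁' y₂' e he0 hecap hx' hy₁' hy₂' hmF₁ hmF₂ hGlt
    have het : e ≠ ⊤ := (hecap.trans_lt hεcapt.lt_top).ne
    have hsum : ∀ (dd : ℝ≥0∞) (E : ℝ≥0∞), dd ≤ ENNReal.ofReal (Rr / 2) → E ≤ N →
        dd + E * e * (1 - θ)⁻¹ ≤ ENNReal.ofReal Rr := by
      intro dd E hdd hE
      calc dd + E * e * (1 - θ)⁻¹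
          ≤ ENNReal.ofReal (Rr / 2) + ENNReal.ofReal (Rr / 2) :=
            add_le_add hdd (hcap E hE e hecap)
        _ = ENNReal.ofReal Rr := by
            rw [← ENNReal.ofReal_add (by positivity) (by positivity), add_halves]
    obtain ⟨q, hqmem, hqd⟩ := core_iteration F₁ F₂ G hclF₁ hclF₂ hclG xb yb₁ yb₂ z
      a b c d Rr ha hb hc hd hθlt1
      H₁ H₂ (H₃ z hzWc) (H₄ z hzWd) x' y₁' y₂' e he0 het hmF₁ hmF₂ hGlt
      (hsum _ _ hx' hACN) (hsum _ _ hy₁' hCN) (hsum _ _ hy₂' hABCN)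
    refine ⟨q, hqmem, hqd.trans (le_of_eq ?_)⟩
    rw [hKdef]; ring
  -- the key estimate with constant ρ'
  have key : ∀ x ∈ Metric.ball xb r₁, ∀ y₁ ∈ Metric.ball yb₁ r₁, ∀ y₂ ∈ Metric.ball yb₂ r₁,
      ∀ z ∈ Metric.ball zb r₂,
      dzeroInfDist a b (x, y₁, y₂) (preImg (auxMap F₁ F₂ G) z) ≤
        ρ' * lscEnv (auxMap F₁ F₂ G) ((x, y₁, y₂) : X × Y₁ × Y₂) z := by
    intro x hx y₁ hky₁ y₂ hky₂ z hz
    have hzW : z ∈ Wc ∩ Wd := hzsub (Metric.mem_ball.2 ((Metric.mem_ball.1 hz).trans_le hr₂z))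
    set μ := lscEnv (auxMap F₁ F₂ G) ((x, y₁, y₂) : X × Y₁ × Y₂) z with hμdef
    by_cases hcase : μ < t₀
    · -- small case
      have hμt : μ ≠ ⊤ := (hcase.trans_le le_top).ne
      refine le_trans ?_ (mul_le_mul_left hKρ'e.le μ)
      refine ENNReal.le_of_forall_pos_le_add fun η hη hfin => ?_
      set η' := (η : ℝ≥0∞) with hη'def
      have hη'0 : η' ≠ 0 := ENNReal.coe_ne_zero.2 hη.ne'
      have hη2 : η' / 2 ≠ 0 := by simp [ENNReal.div_eq_zero_iff, hη'0]
      have hη2t : η' / 2 ≠ ⊤ := (ENNReal.half_le_self.trans_lt ENNReal.coe_lt_top).ne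
      set d'' := min t₀ (η' / 2 * K⁻¹) with hd''def
      have hd''0 : d'' ≠ 0 :=
        (lt_min (zero_lt_iff.2 ht₀0) (ENNReal.mul_pos hη2 (ENNReal.inv_ne_zero.2 hKt))).ne'
      have hμd : lscEnv (auxMap F₁ F₂ G) ((x, y₁, y₂) : X × Y₁ × Y₂) z < μ + d'' := by
        rw [← hμdef]
        exact ENNReal.lt_add_right hμt hd''0
      rw [lscEnv] at hμd
      have hfreq : ∃ᶠ w' in 𝓝 ((x, y₁, y₂) : X × Y₁ × Y₂),
          EMetric.infEdist z (auxMap F₁ F₂ G w') < μ + d'' :=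
        Filter.frequently_lt_of_liminf_lt (by isBoundedDefault) hμd
      set s₁ := min (Rr / 4) ((η' / 2).toReal) with hs₁def
      set s₂ := min (Rr / 4) ((η' / 2 * A⁻¹).toReal) with hs₂def
      set s₃ := min (Rr / 4) ((η' / 2 * B).toReal) with hs₃def
      have hs₁0 : 0 < s₁ := lt_min (by positivity) (ENNReal.toReal_pos hη2 hη2t)
      have hs₂0 : 0 < s₂ := lt_min (by positivity) (ENNReal.toReal_pos
        (mul_ne_zero hη2 (ENNReal.inv_ne_zero.2 hAt)) (ENNReal.mul_ne_top hη2t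
          (ENNReal.inv_ne_top.2 hA0)))
      have hs₃0 : 0 < s₃ := lt_min (by positivity) (ENNReal.toReal_pos
        (mul_ne_zero hη2 hB0) (ENNReal.mul_ne_top hη2t hBt))
      have hsnb : (Metric.ball x s₁ ×ˢ Metric.ball y₁ s₂ ×ˢ Metric.ball y₂ s₃) ∈
          𝓝 ((x, y₁, y₂) : X × Y₁ × Y₂) :=
        prod_mem_nhds (Metric.ball_mem_nhds _ hs₁0)
          (prod_mem_nhds (Metric.ball_mem_nhds _ hs₂0) (Metric.ball_mem_nhds _ hs₃0))
      obtain ⟨⟨x', y₁', y₂'⟩, hp'lt, hp'mem⟩ :=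
        (hfreq.and_eventually (Filter.eventually_of_mem hsnb fun q hq => hq)).exists
      obtain ⟨hp1, hp2, hp3⟩ := hp'mem
      have hne : (auxMap F₁ F₂ G (x', y₁', y₂')).Nonempty := by
        rcases (auxMap F₁ F₂ G (x', y₁', y₂')).eq_empty_or_nonempty with h | h
        · rw [h, show EMetric.infEdist z (∅ : Set Z) = ⊤ from EMetric.infEdist_empty] at hp'lt
          exact absurd hp'lt not_top_lt
        · exact h
      obtain ⟨w, ⟨⟨hmF₁, hmF₂⟩, -⟩⟩ := hne
      have heq : auxMap F₁ F₂ G (x', y₁', y₂') = G y₁' y₂' :=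
        Set.ext fun w => and_iff_right ⟨hmF₁, hmF₂⟩
      have hGlt : EMetric.infEdist z (G y₁' y₂') < μ + d'' := heq ▸ hp'lt
      have hx'b : edist x' xb ≤ ENNReal.ofReal (Rr / 2) := by
        rw [edist_dist]
        refine ENNReal.ofReal_le_ofReal ?_
        have h1 : dist x' x < s₁ := Metric.mem_ball.1 hp1
        have h2 : dist x xb < r₁ := Metric.mem_ball.1 hx
        have h3 : s₁ ≤ Rr / 4 := min_le_left _ _
        have h4 := dist_triangle x' x xb
        linarith [hr₁Rr]
      have hy₁'b : edist y₁' yb₁ ≤ ENNReal.ofReal (Rr / 2) := by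
        rw [edist_dist]
        refine ENNReal.ofReal_le_ofReal ?_
        have h1 : dist y₁' y₁ < s₂ := Metric.mem_ball.1 hp2
        have h2 : dist y₁ yb₁ < r₁ := Metric.mem_ball.1 hky₁
        have h3 : s₂ ≤ Rr / 4 := min_le_left _ _
        have h4 := dist_triangle y₁' y₁ yb₁
        linarith [hr₁Rr]
      have hy₂'b : edist y₂' yb₂ ≤ ENNReal.ofReal (Rr / 2) := by
        rw [edist_dist]
        refine ENNReal.ofReal_le_ofReal ?_
        have h1 : dist y₂' y₂ < s₃ := Metric.mem_ball.1 hp3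
        have h2 : dist y₂ yb₂ < r₁ := Metric.mem_ball.1 hky₂
        have h3 : s₃ ≤ Rr / 4 := min_le_left _ _
        have h4 := dist_triangle y₂' y₂ yb₂
        linarith [hr₁Rr]
      have hecap : μ + d'' ≤ εcap := by
        calc μ + d'' ≤ t₀ + t₀ := add_le_add hcase.le (min_le_left _ _)
          _ = εcap := ht₀sum
      obtain ⟨q, hqmem, hqd⟩ := coreApply z hzW.1 hzW.2 x' y₁' y₂' (μ + d'')
        ((zero_lt_iff.2 hd''0).trans_le le_add_self) hecap hx'b hy₁'b hy₂'b hmF₁ hmF₂ hGlt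
      have hd1 : edist x x' ≤ η' / 2 := by
        have h1 : edist x x' ≤ ENNReal.ofReal s₁ := by
          rw [edist_dist, dist_comm]
          exact ENNReal.ofReal_le_ofReal (Metric.mem_ball.1 hp1).le
        calc edist x x' ≤ ENNReal.ofReal s₁ := h1
          _ ≤ ENNReal.ofReal ((η' / 2).toReal) := ENNReal.ofReal_le_ofReal (min_le_right _ _)
          _ = η' / 2 := ENNReal.ofReal_toReal hη2t
      have hd2 : edist y₁ y₁' ≤ η' / 2 * A⁻¹ := by
        have h1 : edist y₁ y₁' ≤ ENNReal.ofReal s₂ := by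
          rw [edist_dist, dist_comm]
          exact ENNReal.ofReal_le_ofReal (Metric.mem_ball.1 hp2).le
        calc edist y₁ y₁' ≤ ENNReal.ofReal s₂ := h1
          _ ≤ ENNReal.ofReal ((η' / 2 * A⁻¹).toReal) :=
              ENNReal.ofReal_le_ofReal (min_le_right _ _)
          _ = η' / 2 * A⁻¹ := ENNReal.ofReal_toReal
              (ENNReal.mul_ne_top hη2t (ENNReal.inv_ne_top.2 hA0))
      have hd3 : edist y₂ y₂' ≤ η' / 2 * B := by
        have h1 : edist y₂ y₂' ≤ ENNReal.ofReal s₃ := by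
          rw [edist_dist, dist_comm]
          exact ENNReal.ofReal_le_ofReal (Metric.mem_ball.1 hp3).le
        calc edist y₂ y₂' ≤ ENNReal.ofReal s₃ := h1
          _ ≤ ENNReal.ofReal ((η' / 2 * B).toReal) :=
              ENNReal.ofReal_le_ofReal (min_le_right _ _)
          _ = η' / 2 * B := ENNReal.ofReal_toReal (ENNReal.mul_ne_top hη2t hBt)
      have hdzpp' : dzeroEdist a b ((x, y₁, y₂) : X × Y₁ × Y₂) (x', y₁', y₂') ≤ η' / 2 := by
        refine max_le hd1 (max_le ?_ ?_)
        · calc A * edist y₁ y₁' ≤ A * (η' / 2 * A⁻¹) := mul_le_mul_right hd2 _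
            _ = η' / 2 * (A * A⁻¹) := by ring
            _ = η' / 2 := by rw [ENNReal.mul_inv_cancel hA0 hAt, mul_one]
        · calc B⁻¹ * edist y₂ y₂' ≤ B⁻¹ * (η' / 2 * B) := mul_le_mul_right hd3 _
            _ = η' / 2 * (B⁻¹ * B) := by ring
            _ = η' / 2 := by rw [ENNReal.inv_mul_cancel hB0 hBt, mul_one]
      calc dzeroInfDist a b (x, y₁, y₂) (preImg (auxMap F₁ F₂ G) z)
          ≤ dzeroEdist a b (x, y₁, y₂) q := dzeroInfDist_le_dzeroEdist a b _ hqmem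
        _ ≤ dzeroEdist a b (x, y₁, y₂) (x', y₁', y₂') + dzeroEdist a b (x', y₁', y₂') q :=
            dzeroEdist_triangle a b _ _ _
        _ ≤ η' / 2 + K * (μ + d'') := add_le_add hdzpp' hqd
        _ ≤ η' / 2 + (K * μ + η' / 2) := by
            refine add_le_add le_rfl ?_
            rw [mul_add]
            refine add_le_add le_rfl ?_
            calc K * d'' ≤ K * (η' / 2 * K⁻¹) := mul_le_mul_right (min_le_right _ _) _
              _ = η' / 2 * (K * K⁻¹) := by ring
              _ = η' / 2 := by rw [ENNReal.mul_inv_cancel hK0 hKt, mul_one]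
        _ = K * μ + η' := by rw [add_comm (η' / 2), add_assoc, ENNReal.add_halves]
    · -- large case
      push_neg at hcase
      have hdzb : EMetric.infEdist z (G yb₁ yb₂) < ENNReal.ofReal r₂ := by
        refine (EMetric.infEdist_le_edist_of_mem hzb).trans_lt ?_
        rw [edist_dist]
        exact (ENNReal.ofReal_lt_ofReal_iff hr₂0).2 (Metric.mem_ball.1 hz)
      obtain ⟨q, hqmem, hqd⟩ := coreApply z hzW.1 hzW.2 xb yb₁ yb₂ (ENNReal.ofReal r₂)
        (ENNReal.ofReal_pos.2 hr₂0) hr₂cap (by simp) (by simp) (by simp) hy₁ hy₂ hdzb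
      have hdzpb : dzeroEdist a b ((x, y₁, y₂) : X × Y₁ × Y₂) (xb, yb₁, yb₂) ≤
          Mp * ENNReal.ofReal r₁ := by
        have hxd : edist x xb ≤ ENNReal.ofReal r₁ := by
          rw [edist_dist]; exact ENNReal.ofReal_le_ofReal (Metric.mem_ball.1 hx).le
        have hy1d : edist y₁ yb₁ ≤ ENNReal.ofReal r₁ := by
          rw [edist_dist]; exact ENNReal.ofReal_le_ofReal (Metric.mem_ball.1 hky₁).le
        have hy2d : edist y₂ yb₂ ≤ ENNReal.ofReal r₁ := by
          rw [edist_dist]; exact ENNReal.ofReal_le_ofReal (Metric.mem_ball.1 hky₂).le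
        refine max_le (hxd.trans (le_mul_of_one_le_left zero_le hMp1)) (max_le ?_ ?_)
        · calc A * edist y₁ yb₁ ≤ A * ENNReal.ofReal r₁ := mul_le_mul_right hy1d _
            _ ≤ Mp * ENNReal.ofReal r₁ :=
                mul_le_mul_left ((le_max_left A B⁻¹).trans (le_max_right 1 _)) _
        · calc B⁻¹ * edist y₂ yb₂ ≤ B⁻¹ * ENNReal.ofReal r₁ := mul_le_mul_right hy2d _
            _ ≤ Mp * ENNReal.ofReal r₁ :=
                mul_le_mul_left ((le_max_right A B⁻¹).trans (le_max_right 1 _)) _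
      have hMb1 : Mp * ENNReal.ofReal r₁ ≤ ρ' * t₀ * 2⁻¹ := by
        calc Mp * ENNReal.ofReal r₁ ≤ Mp * b1 := mul_le_mul_right hr₁b1 _
          _ = ρ' * t₀ * 2⁻¹ * (Mp * Mp⁻¹) := by rw [hb1def]; ring
          _ = ρ' * t₀ * 2⁻¹ := by rw [ENNReal.mul_inv_cancel hMp0 hMpt, mul_one]
      have hKb2 : K * ENNReal.ofReal r₂ ≤ ρ' * t₀ * 2⁻¹ := by
        calc K * ENNReal.ofReal r₂ ≤ K * b2 := mul_le_mul_right hr₂b2 _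
          _ = ρ' * t₀ * 2⁻¹ * (K * K⁻¹) := by rw [hb2def]; ring
          _ = ρ' * t₀ * 2⁻¹ := by rw [ENNReal.mul_inv_cancel hK0 hKt, mul_one]
      calc dzeroInfDist a b (x, y₁, y₂) (preImg (auxMap F₁ F₂ G) z)
          ≤ dzeroEdist a b (x, y₁, y₂) q := dzeroInfDist_le_dzeroEdist a b _ hqmem
        _ ≤ dzeroEdist a b (x, y₁, y₂) (xb, yb₁, yb₂) + dzeroEdist a b (xb, yb₁, yb₂) q :=
            dzeroEdist_triangle a b _ _ _
        _ ≤ Mp * ENNReal.ofReal r₁ + K * ENNReal.ofReal r₂ := add_le_add hdzpb hqd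
        _ ≤ ρ' * t₀ * 2⁻¹ + ρ' * t₀ * 2⁻¹ := add_le_add hMb1 hKb2
        _ = ρ' * t₀ := by rw [← mul_add, ENNReal.inv_two_add_inv_two, mul_one]
        _ ≤ ρ' * μ := mul_le_mul_right hcase _
  refine ⟨a, ha, b, hb, Metric.ball xb r₁, Metric.ball_mem_nhds _ hr₁0,
    Metric.ball yb₁ r₁, Metric.ball_mem_nhds _ hr₁0,
    Metric.ball yb₂ r₁, Metric.ball_mem_nhds _ hr₁0,
    Metric.ball zb r₂, Metric.ball_mem_nhds _ hr₂0, ?_, ?_⟩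
  · intro x hx y₁ hy₁ y₂ hy₂ z hz
    exact (key x hx y₁ hy₁ y₂ hy₂ z hz).trans (mul_le_mul_left hρ'ρ _)
  · intro x hx y₁ hy₁ y₂ hy₂ z hz
    refine ((key x hx y₁ hy₁ y₂ hy₂ z hz).trans (mul_le_mul_left hρ'ρ _)).trans ?_
    refine mul_le_mul_right ?_ ρ
    refine Filter.liminf_le_of_frequently_le ?_
    have hfr : ∃ᶠ p' in pure ((x, y₁, y₂) : X × Y₁ × Y₂),
        EMetric.infEdist z (auxMap F₁ F₂ G p') ≤
          EMetric.infEdist z (auxMap F₁ F₂ G (x, y₁, y₂)) :=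
      (Filter.eventually_pure.2 le_rfl).frequently
    exact hfr.filter_mono (pure_le_nhds _)
end
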